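/- arXiv:2501.01361 — 4 statements merged into one kernel-verified Lean document; each statement's English description precedes it below -/
import Mathlib

section
/- A Sylow 3-subgroup P of the alternating group A₉ has order 81 = 3⁴, nilpotency class 3 (hence is of maximal class), is isomorphic to the wreath product C₃ ≀ C₃, and possesses an abelian maximal subgroup (of index 3) isomorphic to C₃ × C₃ × C₃, which coincides with the two-step centralizer γ₁P; since an elementary abelian group of rank 3 is not metacyclic, the hypothesis n > 4 in Huppert's theorem on 3-groups of maximal class cannot be weakened to n = 4. -/
/-- The two-step centralizer `γ₁ G`: the preimage in `G` of the centralizer of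
`γ₂ G / γ₄ G` in `G / γ₄ G` (with `γ₂ G = [G,G] = lowerCentralSeries G 1` and
`γ₄ G = lowerCentralSeries G 3`). -/
def twoStepCentralizer (G : Type*) [Group G] : Subgroup G :=
  Subgroup.comap (QuotientGroup.mk' (Subgroup.lowerCentralSeries (⊤ : Subgroup G) 3))
    (Subgroup.centralizer
      ((Subgroup.map (QuotientGroup.mk' (Subgroup.lowerCentralSeries (⊤ : Subgroup G) 3))
        (Subgroup.lowerCentralSeries (⊤ : Subgroup G) 1) : Subgroup (G ⧸ Subgroup.lowerCentralSeries (⊤ : Subgroup G) 3)) :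
        Set (G ⧸ Subgroup.lowerCentralSeries (⊤ : Subgroup G) 3)))

/-- A group is *metacyclic* if it has a cyclic normal subgroup with cyclic quotient. -/
def IsMetacyclic (G : Type*) [Group G] : Prop :=
  ∃ H : Subgroup G, ∃ _ : H.Normal, IsCyclic H ∧ IsCyclic (G ⧸ H)

/-- The shift automorphism of the base group `C₃ × C₃ × C₃`
(realized as `ZMod 3 → Multiplicative (ZMod 3)`) of the regular wreath product `C₃ ≀ C₃`. -/
def shiftAut (c : ZMod 3) : MulAut (ZMod 3 → Multiplicative (ZMod 3)) where
  toFun f i := f (i - c)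
  invFun f i := f (i + c)
  left_inv f := by funext i; simp
  right_inv f := by funext i; simp
  map_mul' f g := rfl

/-- The permutation action of the top cyclic group `C₃` on the base group of the
regular wreath product `C₃ ≀ C₃`. -/
def wreathShift : Multiplicative (ZMod 3) →* MulAut (ZMod 3 → Multiplicative (ZMod 3)) where
  toFun c := shiftAut c.toAdd
  map_one' := by
    ext f i
    simp [shiftAut]
  map_mul' a b := by
    ext f i
    simp only [shiftAut, MulAut.mul_apply, MulEquiv.coe_mk, Equiv.coe_fn_mk, toAdd_mul]
    ring_nf

/-- The regular wreath product `C₃ ≀ C₃` of two cyclic groups of order `3`. -/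
def WreathProductC3C3 : Type :=
  (ZMod 3 → Multiplicative (ZMod 3)) ⋊[wreathShift] Multiplicative (ZMod 3)

instance : Group WreathProductC3C3 :=
  inferInstanceAs (Group ((ZMod 3 → Multiplicative (ZMod 3)) ⋊[wreathShift]
    Multiplicative (ZMod 3)))



open scoped commutatorElement

set_option maxRecDepth 1000000

abbrev WPB := ZMod 3 → Multiplicative (ZMod 3)
abbrev WP := WPB ⋊[wreathShift] Multiplicative (ZMod 3)

def wpEquivProd : WP ≃ WPB × Multiplicative (ZMod 3) where
  toFun x := (x.left, x.right)
  invFun p := ⟨p.1, p.2⟩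
  left_inv _ := rfl
  right_inv _ := rfl

instance : Fintype WP := Fintype.ofEquiv _ wpEquivProd.symm
instance : DecidableEq WP := wpEquivProd.decidableEq

lemma wp_card : Nat.card WP = 81 := by
  rw [Nat.card_eq_fintype_card]; decide

/-- multiplication of base elements -/
lemma wp_base_mul (f g : WPB) :
    (⟨f, 1⟩ : WP) * ⟨g, 1⟩ = ⟨f * g, 1⟩ := by
  have h : wreathShift 1 g = g := by
    funext i
    show g (i - (0 : ZMod 3)) = g i
    rw [sub_zero]
  show (⟨f * wreathShift 1 g, 1 * 1⟩ : WP) = ⟨f * g, 1⟩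
  rw [h, mul_one]

lemma wp_base_comm (f g : WPB) :
    (⟨f, 1⟩ : WP) * ⟨g, 1⟩ = (⟨g, 1⟩ : WP) * ⟨f, 1⟩ := by
  rw [wp_base_mul, wp_base_mul, mul_comm]

lemma wp_decomp (y : WP) : y = (⟨y.left, 1⟩ : WP) * ⟨1, y.right⟩ := by
  show y = ⟨y.left * wreathShift 1 1, 1 * y.right⟩
  rw [map_one, mul_one, one_mul]

/-- the predicate cutting out `γ₂ = [W,W]` : base elements whose coordinates sum to zero -/
def pred1 (x : WP) : Prop := x.right = 1 ∧ x.left 0 * x.left 1 * x.left 2 = 1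

/-- the predicate cutting out `γ₃` : constant base elements -/
def pred2 (x : WP) : Prop := x.right = 1 ∧ x.left 0 = x.left 1 ∧ x.left 1 = x.left 2

instance : DecidablePred pred1 := fun _ => inferInstanceAs (Decidable (_ ∧ _))
instance : DecidablePred pred2 := fun _ => inferInstanceAs (Decidable (_ ∧ _))

def L1 : Subgroup WP where
  carrier := {x | pred1 x}
  one_mem' := by decide
  mul_mem' := by
    have h : ∀ a b : WP, pred1 a → pred1 b → pred1 (a * b) := by decide
    exact fun {a b} ha hb => h a b ha hb
  inv_mem' := by
    have h : ∀ a : WP, pred1 a → pred1 a⁻¹ := by decide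
    exact fun {a} ha => h a ha

def L2 : Subgroup WP where
  carrier := {x | pred2 x}
  one_mem' := by decide
  mul_mem' := by
    have h : ∀ a b : WP, pred2 a → pred2 b → pred2 (a * b) := by decide
    exact fun {a b} ha hb => h a b ha hb
  inv_mem' := by
    have h : ∀ a : WP, pred2 a → pred2 a⁻¹ := by decide
    exact fun {a} ha => h a ha

def LB : Subgroup WP where
  carrier := {x | x.right = 1}
  one_mem' := rfl
  mul_mem' := by
    intro a b (ha : a.right = 1) (hb : b.right = 1)
    show a.right * b.right = 1
    rw [ha, hb, mul_one]
  inv_mem' := by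
    intro a (ha : a.right = 1)
    show a.right⁻¹ = 1
    rw [ha]; rfl

lemma mem_L1 {x : WP} : x ∈ L1 ↔ pred1 x := Iff.rfl
lemma mem_L2 {x : WP} : x ∈ L2 ↔ pred2 x := Iff.rfl
lemma mem_LB {x : WP} : x ∈ LB ↔ x.right = 1 := Iff.rfl

instance : DecidablePred (· ∈ L1) := fun _ => decidable_of_iff _ mem_L1.symm
instance : DecidablePred (· ∈ L2) := fun _ => decidable_of_iff _ mem_L2.symm
instance : DecidablePred (· ∈ LB) := fun _ => decidable_of_iff _ mem_LB.symm

def aelt : WP := ⟨fun i => if i = 0 then Multiplicative.ofAdd 1 else 1, 1⟩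
def telt : WP := ⟨1, Multiplicative.ofAdd 1⟩
def g1val : WP :=
  ⟨fun i => Multiplicative.ofAdd (if i = 0 then 1 else if i = 1 then 2 else 0), 1⟩
def g2val : WP :=
  ⟨fun i => Multiplicative.ofAdd (if i = 0 then 0 else if i = 1 then 1 else 2), 1⟩
def zval : WP := ⟨fun _ => Multiplicative.ofAdd 1, 1⟩

lemma g1def : g1val = ⁅aelt, telt⁆ := by decide
lemma g2def : g2val = ⁅(⟨fun i => if i = 1 then Multiplicative.ofAdd 1 else 1, 1⟩ : WP), telt⁆ := by
  decide
lemma zdef : zval = ⁅g1val, telt⁆ := by decide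

/-- the "coordinate–sum, top-component" homomorphism onto an abelian group;
its kernel is `L1`. -/
def sigmaHom : WP →* Multiplicative (ZMod 3) × Multiplicative (ZMod 3) where
  toFun x := (x.left 0 * x.left 1 * x.left 2, x.right)
  map_one' := rfl
  map_mul' x y := by
    have key : ∀ (g : WPB) (c : ZMod 3),
        g (0 - c) * g (1 - c) * g (2 - c) = g 0 * g 1 * g 2 := by decide
    have h1 : (x * y).left 0 * (x * y).left 1 * (x * y).left 2 =
        x.left 0 * y.left (0 - x.right.toAdd) * (x.left 1 * y.left (1 - x.right.toAdd)) *
          (x.left 2 * y.left (2 - x.right.toAdd)) := rfl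
    ext
    · show (x * y).left 0 * (x * y).left 1 * (x * y).left 2 = _
      rw [h1, mul_mul_mul_comm (x.left 0) (y.left (0 - x.right.toAdd)),
        mul_mul_mul_comm (x.left 0 * x.left 1) _ (x.left 2), key y.left x.right.toAdd]
      rfl
    · rfl

lemma pred1_iff_sigma (x : WP) : pred1 x ↔ sigmaHom x = 1 := by
  rw [Prod.ext_iff]
  exact ⟨fun h => ⟨h.2, h.1⟩, fun h => ⟨h.2, h.1⟩⟩

/-- γ₂(WP) = L1 -/
lemma lcs1_eq : Subgroup.lowerCentralSeries (⊤ : Subgroup WP) 1 = L1 := by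
  apply le_antisymm
  · rw [show Subgroup.lowerCentralSeries (⊤ : Subgroup WP) 1 = ⁅Subgroup.lowerCentralSeries (⊤ : Subgroup WP) 0, ⊤⁆ from rfl,
      lowerCentralSeries_zero, Subgroup.commutator_le]
    intro x _ y _
    rw [mem_L1, pred1_iff_sigma, map_commutatorElement]
    exact commutatorElement_eq_one_iff_mul_comm.mpr (mul_comm _ _)
  · intro x hx
    rw [mem_L1] at hx
    have h : ∀ x : WP, pred1 x → ∃ i < 3, ∃ j < 3, x = g1val ^ i * g2val ^ j := by decide
    obtain ⟨i, _, j, _, rfl⟩ := h x hx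
    have h1 : g1val ∈ Subgroup.lowerCentralSeries (⊤ : Subgroup WP) 1 := by
      rw [g1def]
      exact Subgroup.commutator_mem_commutator (Subgroup.mem_top _) (Subgroup.mem_top _)
    have h2 : g2val ∈ Subgroup.lowerCentralSeries (⊤ : Subgroup WP) 1 := by
      rw [g2def]
      exact Subgroup.commutator_mem_commutator (Subgroup.mem_top _) (Subgroup.mem_top _)
    exact mul_mem (pow_mem h1 i) (pow_mem h2 j)

lemma L2_le_center : L2 ≤ Subgroup.center WP := by
  intro x hx
  rw [mem_L2] at hx
  rw [Subgroup.mem_center_iff]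
  have h : ∀ x : WP, pred2 x → ∀ g : WP, g * x = x * g := by decide
  exact h x hx

lemma comm_with_top : ∀ x : WP, pred1 x →
    ∀ c : Multiplicative (ZMod 3), ⁅x, (⟨1, c⟩ : WP)⁆ ∈ L2 := by decide

/-- γ₃(WP) = L2 -/
lemma lcs2_eq : Subgroup.lowerCentralSeries (⊤ : Subgroup WP) 2 = L2 := by
  apply le_antisymm
  · rw [show Subgroup.lowerCentralSeries (⊤ : Subgroup WP) 2 = ⁅Subgroup.lowerCentralSeries (⊤ : Subgroup WP) 1, ⊤⁆ from rfl,
      lcs1_eq, Subgroup.commutator_le]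
    intro x hx y _
    rw [mem_L1] at hx
    have hdec := wp_decomp y
    set b : WP := ⟨y.left, 1⟩ with hb
    set k : WP := ⟨1, y.right⟩ with hk
    have hxb : ⁅x, b⁆ = 1 := by
      rw [commutatorElement_eq_one_iff_mul_comm]
      have hx1 : x = (⟨x.left, 1⟩ : WP) := by
        cases x with
        | mk f c => cases hx.1; rfl
      rw [hx1, hb, wp_base_comm]
    have hid : ⁅x, b * k⁆ = ⁅x, b⁆ * (b * ⁅x, k⁆ * b⁻¹) := by
      simp only [commutatorElement_def]
      group
    rw [hdec, hid, hxb, one_mul]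
    have hk2 : ⁅x, k⁆ ∈ L2 := comm_with_top x hx y.right
    have := L2_le_center hk2
    rw [Subgroup.mem_center_iff] at this
    rw [this b, mul_assoc, mul_inv_cancel, mul_one]
    exact hk2
  · intro x hx
    rw [mem_L2] at hx
    have h : ∀ x : WP, pred2 x → ∃ i < 3, x = zval ^ i := by decide
    obtain ⟨i, _, rfl⟩ := h x hx
    have hz : zval ∈ Subgroup.lowerCentralSeries (⊤ : Subgroup WP) 2 := by
      rw [zdef, show Subgroup.lowerCentralSeries (⊤ : Subgroup WP) 2 = ⁅Subgroup.lowerCentralSeries (⊤ : Subgroup WP) 1, ⊤⁆ from rfl]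
      exact Subgroup.commutator_mem_commutator (by rw [lcs1_eq]; decide) (Subgroup.mem_top _)
    exact pow_mem hz i

/-- γ₄(WP) = ⊥ -/
lemma lcs3_eq : Subgroup.lowerCentralSeries (⊤ : Subgroup WP) 3 = ⊥ :=
  lowerCentralSeries_succ_eq_bot ⊤ (lcs2_eq ▸ L2_le_center)

lemma lcs2_ne_bot : Subgroup.lowerCentralSeries (⊤ : Subgroup WP) 2 ≠ ⊥ := by
  rw [lcs2_eq]
  intro h
  have hz : zval ∈ L2 := mem_L2.mpr (by decide)
  rw [h, Subgroup.mem_bot] at hz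
  exact absurd hz (by decide)

lemma centralizer_L1 : Subgroup.centralizer (L1 : Set WP) = LB := by
  apply le_antisymm
  · intro x hx
    rw [Subgroup.mem_centralizer_iff] at hx
    have hg1 : g1val ∈ (L1 : Set WP) := SetLike.mem_coe.mpr (mem_L1.mpr (by decide))
    have key : ∀ x : WP, ¬ x.right = 1 → ¬ g1val * x = x * g1val := by decide
    rw [mem_LB]
    by_contra hr
    exact key x hr (hx g1val hg1)
  · intro x hx
    rw [mem_LB] at hx
    rw [Subgroup.mem_centralizer_iff]
    intro h hh
    have hh1 : h.right = 1 := hh.1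
    have hx1 : x = (⟨x.left, 1⟩ : WP) := by cases x with | mk f c => cases hx; rfl
    have hh2 : h = (⟨h.left, 1⟩ : WP) := by cases h with | mk f c => cases hh1; rfl
    rw [hx1, hh2, wp_base_comm]

lemma LB_pow3 : ∀ x : WP, x ∈ LB → x ^ 3 = 1 := by
  intro x hx
  rw [mem_LB] at hx
  have h : ∀ x : WP, x.right = 1 → x ^ 3 = 1 := by decide
  exact h x hx

lemma LB_card : Nat.card LB = 27 := by
  rw [Nat.card_eq_fintype_card]
  decide

lemma LB_comm : ∀ x y : WP, x ∈ LB → y ∈ LB → x * y = y * x := by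
  intro x y hx hy
  rw [mem_LB] at hx hy
  have hx1 : x = (⟨x.left, 1⟩ : WP) := by cases x with | mk f c => cases hx; rfl
  have hy1 : y = (⟨y.left, 1⟩ : WP) := by cases y with | mk f c => cases hy; rfl
  rw [hx1, hy1, wp_base_comm]

/-- the base subgroup is elementary abelian of rank 3 -/
def lbEquiv : LB ≃* (Multiplicative (ZMod 3) × Multiplicative (ZMod 3) ×
    Multiplicative (ZMod 3)) where
  toFun x := (x.val.left 0, x.val.left 1, x.val.left 2)
  invFun p := ⟨⟨fun i => if i = 0 then p.1 else if i = 1 then p.2.1 else p.2.2, 1⟩, rfl⟩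
  left_inv := by
    rintro ⟨⟨f, c⟩, hc⟩
    have hc1 : c = 1 := hc
    subst hc1
    apply Subtype.ext
    show SemidirectProduct.mk _ 1 = SemidirectProduct.mk f 1
    congr 1
    funext i
    fin_cases i <;> rfl
  right_inv := fun p => rfl
  map_mul' := by
    rintro ⟨⟨f, c⟩, hc⟩ ⟨⟨g, d⟩, hd⟩
    have hc1 : c = 1 := hc
    have hd1 : d = 1 := hd
    subst hc1; subst hd1
    have : (⟨⟨f, 1⟩, hc⟩ * ⟨⟨g, 1⟩, hd⟩ : LB).val = (⟨f * g, 1⟩ : WP) := wp_base_mul f g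
    rw [Prod.ext_iff, Prod.ext_iff]
    exact ⟨congrArg (fun z : WP => z.left 0) this, congrArg (fun z : WP => z.left 1) this,
      congrArg (fun z : WP => z.left 2) this⟩

/-- imprimitive action of the wreath product on 9 points -/
def wact (w : WP) : Equiv.Perm (ZMod 3 × ZMod 3) where
  toFun p := (p.1 + w.right.toAdd, p.2 + (w.left (p.1 + w.right.toAdd)).toAdd)
  invFun p := (p.1 - w.right.toAdd, p.2 - (w.left p.1).toAdd)
  left_inv p := by simp
  right_inv p := by simp

def rho : WP →* Equiv.Perm (ZMod 3 × ZMod 3) where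
  toFun := wact
  map_one' := by
    ext p <;> simp [wact]
  map_mul' x y := by
    ext p
    · show p.1 + (x.right * y.right).toAdd = (p.1 + y.right.toAdd) + x.right.toAdd
      rw [toAdd_mul]; ring
    · show p.2 + ((x.left * wreathShift x.right y.left)
          (p.1 + (x.right * y.right).toAdd)).toAdd
        = (p.2 + (y.left (p.1 + y.right.toAdd)).toAdd)
          + (x.left ((p.1 + y.right.toAdd) + x.right.toAdd)).toAdd
      show p.2 + ((x.left (p.1 + (x.right * y.right).toAdd)).toAdd
          + (y.left ((p.1 + (x.right * y.right).toAdd) - x.right.toAdd)).toAdd)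
        = (p.2 + (y.left (p.1 + y.right.toAdd)).toAdd)
          + (x.left ((p.1 + y.right.toAdd) + x.right.toAdd)).toAdd
      rw [toAdd_mul,
        show p.1 + (x.right.toAdd + y.right.toAdd) - x.right.toAdd
            = p.1 + y.right.toAdd from by ring,
        show p.1 + (x.right.toAdd + y.right.toAdd)
            = p.1 + y.right.toAdd + x.right.toAdd from by ring]
      ring

lemma rho_injective : Function.Injective rho := by
  intro x y h
  have hp : ∀ p : ZMod 3 × ZMod 3, rho x p = rho y p := by rw [h]; exact fun _ => rfl
  have hr : x.right = y.right := by
    have h2 : (0 : ZMod 3) + x.right.toAdd = 0 + y.right.toAdd :=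
      congrArg Prod.fst (hp (0, 0))
    rw [zero_add, zero_add] at h2
    exact Multiplicative.toAdd.injective h2
  have hl : x.left = y.left := by
    funext i
    have h3 : (0 : ZMod 3) + (x.left ((i - x.right.toAdd) + x.right.toAdd)).toAdd
        = 0 + (y.left ((i - x.right.toAdd) + y.right.toAdd)).toAdd :=
      congrArg Prod.snd (hp (i - x.right.toAdd, 0))
    rw [zero_add, zero_add, ← hr, sub_add_cancel] at h3
    exact Multiplicative.toAdd.injective h3
  cases x; cases y
  cases hl; cases hr
  rfl

/-- relabel the 9 points -/
def e9 : ZMod 3 × ZMod 3 ≃ Fin 9 := finProdFinEquiv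

/-- conjugation of permutation groups by `e9` -/
def permME : Equiv.Perm (ZMod 3 × ZMod 3) ≃* Equiv.Perm (Fin 9) where
  toFun σ := (e9.symm.trans σ).trans e9
  invFun σ := (e9.trans σ).trans e9.symm
  left_inv σ := Equiv.ext fun p => by
    simp only [Equiv.trans_apply, Equiv.symm_apply_apply, Equiv.apply_symm_apply]
  right_inv σ := Equiv.ext fun p => by
    simp only [Equiv.trans_apply, Equiv.symm_apply_apply, Equiv.apply_symm_apply]
  map_mul' σ τ := by ext p; simp [Equiv.Perm.mul_apply]

def tau : WP →* Equiv.Perm (Fin 9) := permME.toMonoidHom.comp rho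

lemma tau_injective : Function.Injective tau :=
  permME.injective.comp rho_injective

lemma tau_sign (w : WP) : Equiv.Perm.sign (tau w) = 1 := by
  have h81 : tau w ^ 81 = 1 := by
    rw [← map_pow, ← wp_card, pow_card_eq_one', map_one]
  have hs : Equiv.Perm.sign (tau w) ^ 81 = 1 := by
    rw [← map_pow, h81, map_one]
  rcases Int.units_eq_one_or (Equiv.Perm.sign (tau w)) with h | h
  · exact h
  · rw [h, Odd.neg_one_pow ⟨40, by norm_num⟩] at hs
    exact absurd hs (by decide)

def phi : WP →* alternatingGroup (Fin 9) :=
  tau.codRestrict (alternatingGroup (Fin 9))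
    (fun w => Equiv.Perm.mem_alternatingGroup.mpr (tau_sign w))

lemma phi_injective : Function.Injective phi := by
  intro a b h
  exact tau_injective (congrArg Subtype.val h : tau a = tau b)

lemma cardA9 : Nat.card (alternatingGroup (Fin 9)) = 181440 := by
  have h2 := two_mul_card_alternatingGroup (α := Fin 9)
  rw [Fintype.card_perm, Fintype.card_fin] at h2
  rw [Nat.card_eq_fintype_card]
  have h9 : Nat.factorial 9 = 362880 := by norm_num [Nat.factorial]
  omega

lemma factA9 : (Nat.card (alternatingGroup (Fin 9))).factorization 3 = 4 := by
  rw [cardA9]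
  have hp : Nat.Prime 3 := by norm_num
  apply le_antisymm
  · by_contra hc
    push_neg at hc
    have h5 : (3 : ℕ) ^ 5 ∣ 181440 :=
      (Nat.Prime.pow_dvd_iff_le_factorization hp (by norm_num)).mpr hc
    norm_num at h5
  · exact (Nat.Prime.pow_dvd_iff_le_factorization hp (by norm_num)).mp (by norm_num)

/-- transfer of the lower central series along an isomorphism -/
lemma lcs_map_equiv {G H : Type*} [Group G] [Group H] (e : G ≃* H) (n : ℕ) :
    Subgroup.map e.toMonoidHom (Subgroup.lowerCentralSeries (⊤ : Subgroup G) n) = Subgroup.lowerCentralSeries (⊤ : Subgroup H) n := by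
  apply le_antisymm (lowerCentralSeries.map e.toMonoidHom n)
  intro x hx
  have h2 := lowerCentralSeries.map e.symm.toMonoidHom n
    (Subgroup.mem_map_of_mem e.symm.toMonoidHom hx)
  exact ⟨e.symm x, h2, e.apply_symm_apply x⟩

/-- transfer of centralizers along an isomorphism -/
lemma centralizer_map_equiv {G H : Type*} [Group G] [Group H] (e : G ≃* H) (S : Set G) :
    Subgroup.map e.toMonoidHom (Subgroup.centralizer S) = Subgroup.centralizer (e.toMonoidHom '' S) := by
  ext h
  simp only [Subgroup.mem_map, Subgroup.mem_centralizer_iff, MulEquiv.coe_toMonoidHom]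
  constructor
  · rintro ⟨g, hg, rfl⟩ y ⟨s, hs, rfl⟩
    rw [← map_mul, ← map_mul, hg s hs]
  · intro hy
    refine ⟨e.symm h, fun s hs => e.injective ?_, e.apply_symm_apply h⟩
    rw [map_mul, map_mul, e.apply_symm_apply]
    exact hy (e s) ⟨s, hs, rfl⟩

/-- when `γ₄ G = ⊥`, the two-step centralizer is just the centralizer of `γ₂ G` -/
lemma tsc_of_lcs3_bot {G : Type*} [Group G] (h : Subgroup.lowerCentralSeries (⊤ : Subgroup G) 3 = ⊥) :
    twoStepCentralizer G = Subgroup.centralizer (Subgroup.lowerCentralSeries (⊤ : Subgroup G) 1 : Set G) := by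
  have hinj : Function.Injective (QuotientGroup.mk' (Subgroup.lowerCentralSeries (⊤ : Subgroup G) 3)) := by
    rw [← MonoidHom.ker_eq_bot_iff, QuotientGroup.ker_mk']
    exact h
  ext x
  simp only [twoStepCentralizer, Subgroup.mem_comap, Subgroup.mem_centralizer_iff]
  constructor
  · intro hx y hy
    have := hx ((QuotientGroup.mk' (Subgroup.lowerCentralSeries (⊤ : Subgroup G) 3)) y)
      (Subgroup.mem_map_of_mem _ hy)
    apply hinj
    rw [map_mul, map_mul]
    exact this
  · intro hx y hy
    rw [SetLike.mem_coe, Subgroup.mem_map] at hy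
    obtain ⟨z, hz, rfl⟩ := hy
    rw [← map_mul, ← map_mul, hx z hz]

def wpId : WP ≃* WreathProductC3C3 where
  toFun x := x
  invFun x := x
  left_inv _ := rfl
  right_inv _ := rfl
  map_mul' _ _ := rfl

/-- A Sylow `3`-subgroup `P` of the alternating group `A₉` has order `81 = 3⁴`,
nilpotency class `3` (hence is of maximal class), is isomorphic to the regular wreath
product `C₃ ≀ C₃`, and possesses an abelian maximal subgroup of index `3` isomorphic to
`C₃ × C₃ × C₃` which coincides with the two-step centralizer `γ₁ P`; this subgroup,
being elementary abelian of rank `3`, is not metacyclic — so the hypothesis `n > 4` in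
Huppert's theorem on `3`-groups of maximal class cannot be weakened to `n = 4`. -/
theorem sylow_three_alternatingNine
    (P : Sylow 3 (alternatingGroup (Fin 9)))
    [Group.IsNilpotent (P : Subgroup (alternatingGroup (Fin 9)))] :
    Nat.card (P : Subgroup (alternatingGroup (Fin 9))) = 81 ∧
    Group.nilpotencyClass (P : Subgroup (alternatingGroup (Fin 9))) = 3 ∧
    Nonempty ((P : Subgroup (alternatingGroup (Fin 9))) ≃* WreathProductC3C3) ∧
    ∃ M : Subgroup (P : Subgroup (alternatingGroup (Fin 9))),
      IsCoatom M ∧ M.index = 3 ∧ (∀ x y : M, x * y = y * x) ∧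
      Nonempty (M ≃* (Multiplicative (ZMod 3) × Multiplicative (ZMod 3) ×
        Multiplicative (ZMod 3))) ∧
      M = twoStepCentralizer (P : Subgroup (alternatingGroup (Fin 9))) ∧
      ¬ IsMetacyclic M := by
  have cardQ : Nat.card phi.range = 81 := by
    rw [← wp_card]
    exact (Nat.card_congr (MonoidHom.ofInjective phi_injective).toEquiv).symm
  let Qsyl : Sylow 3 (alternatingGroup (Fin 9)) :=
    Sylow.ofCard phi.range (by rw [cardQ, factA9]; norm_num)
  have cardP : Nat.card (P : Subgroup (alternatingGroup (Fin 9))) = 81 := by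
    rw [Sylow.card_eq_multiplicity P, factA9]; norm_num
  let e : WP ≃* (P : Subgroup (alternatingGroup (Fin 9))) :=
    (MonoidHom.ofInjective phi_injective).trans (Sylow.equiv Qsyl P)
  have lcsP3 : Subgroup.lowerCentralSeries (⊤ : Subgroup (P : Subgroup (alternatingGroup (Fin 9)))) 3 = ⊥ := by
    rw [← lcs_map_equiv e 3, lcs3_eq, Subgroup.map_bot]
  have lcsP1 : Subgroup.lowerCentralSeries (⊤ : Subgroup (P : Subgroup (alternatingGroup (Fin 9)))) 1
      = Subgroup.map e.toMonoidHom L1 := by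
    rw [← lcs_map_equiv e 1, lcs1_eq]
  have lcsP2ne : Subgroup.lowerCentralSeries (⊤ : Subgroup (P : Subgroup (alternatingGroup (Fin 9)))) 2 ≠ ⊥ := by
    intro hbot
    apply lcs2_ne_bot
    rw [← lcs_map_equiv e.symm 2, hbot, Subgroup.map_bot]
  refine ⟨cardP, ?_, ⟨e.symm.trans wpId⟩, ?_⟩
  · have h3 := lowerCentralSeries_eq_bot_iff_nilpotencyClass_le.mp lcsP3
    have h2 : ¬ (Group.nilpotencyClass (P : Subgroup (alternatingGroup (Fin 9))) ≤ 2) :=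
      fun hc => lcsP2ne (lowerCentralSeries_eq_bot_iff_nilpotencyClass_le.mpr hc)
    omega
  · refine ⟨Subgroup.map e.toMonoidHom LB, ?_⟩
    -- basic cardinality facts about `M`
    have hMcard : Nat.card (Subgroup.map e.toMonoidHom LB) = 27 := by
      rw [← LB_card]
      exact (Nat.card_congr
        (Subgroup.equivMapOfInjective LB e.toMonoidHom e.injective).toEquiv).symm
    have hMindex : (Subgroup.map e.toMonoidHom LB).index = 3 := by
      have h := Subgroup.card_mul_index (Subgroup.map e.toMonoidHom LB)
      rw [hMcard, cardP] at h
      omega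
    have hpow : ∀ x : Subgroup.map e.toMonoidHom LB, x ^ 3 = 1 := by
      rintro ⟨x, hx⟩
      obtain ⟨a, ha, rfl⟩ := Subgroup.mem_map.mp hx
      apply Subtype.ext
      rw [SubmonoidClass.coe_pow]
      show (e.toMonoidHom a) ^ 3 = 1
      rw [← map_pow, LB_pow3 a ha, map_one]
    refine ⟨⟨?_, ?_⟩, hMindex, ?_, ?_, ?_, ?_⟩
    · -- M ≠ ⊤
      intro h
      rw [h, Subgroup.index_top] at hMindex
      omega
    · -- maximality
      intro K hK
      have hdvd : K.index ∣ (Subgroup.map e.toMonoidHom LB).index :=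
        Subgroup.index_dvd_of_le hK.le
      rw [hMindex] at hdvd
      rcases (Nat.Prime.eq_one_or_self_of_dvd (by norm_num) _ hdvd) with h1 | h3
      · exact Subgroup.index_eq_one.mp h1
      · exfalso
        have hrel := Subgroup.relIndex_mul_index hK.le
        rw [hMindex, h3] at hrel
        have hone : (Subgroup.map e.toMonoidHom LB).relIndex K = 1 := by omega
        exact hK.ne (le_antisymm hK.le (Subgroup.relIndex_eq_one.mp hone))
    · -- commutativity
      rintro ⟨x, hx⟩ ⟨y, hy⟩
      apply Subtype.ext
      obtain ⟨a, ha, rfl⟩ := Subgroup.mem_map.mp hx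
      obtain ⟨b, hb, rfl⟩ := Subgroup.mem_map.mp hy
      show e.toMonoidHom a * e.toMonoidHom b = e.toMonoidHom b * e.toMonoidHom a
      rw [← map_mul, ← map_mul, LB_comm a b ha hb]
    · -- isomorphic to C₃ × C₃ × C₃
      exact ⟨(Subgroup.equivMapOfInjective LB e.toMonoidHom e.injective).symm.trans lbEquiv⟩
    · -- equals the two-step centralizer
      rw [tsc_of_lcs3_bot lcsP3, lcsP1, Subgroup.coe_map, ← centralizer_map_equiv e,
        centralizer_L1]
    · -- not metacyclic
      rintro ⟨H, hHn, hHc, hQc⟩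
      have hH3 : ∀ g : H, g ^ 3 = 1 := by
        intro g
        apply Subtype.ext
        rw [SubmonoidClass.coe_pow, OneMemClass.coe_one]
        exact hpow g.val
      have hQ3 : ∀ q : (Subgroup.map e.toMonoidHom LB) ⧸ H, q ^ 3 = 1 := by
        intro q
        induction q using QuotientGroup.induction_on with
        | H x =>
          rw [← QuotientGroup.mk_pow, hpow x]
          rfl
      have hdH : Nat.card H ∣ 3 := by
        rw [← IsCyclic.exponent_eq_card]
        exact Monoid.exponent_dvd_of_forall_pow_eq_one hH3
      have hdQ : Nat.card ((Subgroup.map e.toMonoidHom LB) ⧸ H) ∣ 3 := by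
        rw [← IsCyclic.exponent_eq_card]
        exact Monoid.exponent_dvd_of_forall_pow_eq_one hQ3
      have htot := Subgroup.card_eq_card_quotient_mul_card_subgroup H
      rw [hMcard] at htot
      have h1 := Nat.le_of_dvd (by norm_num) hdH
      have h2 := Nat.le_of_dvd (by norm_num) hdQ
      have h3 := Nat.mul_le_mul h2 h1
      omega
end

section
/- Let G be a finite 3-group whose commutator quotient G/[G,G] is isomorphic to C₃ × C₃, and let M and N be two distinct maximal subgroups of G such that the kernel of the Artin transfer V_M : G → M/[M,M] equals N and the kernel of the Artin transfer V_N : G → N/[N,N] equals M (a 'transposition' in the transfer kernel type). Then |G| ≥ 3⁵ = 243 and G is not of maximal class; equivalently, the coclass of G is at least 2. -/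
set_option linter.unusedSectionVars false
set_option maxHeartbeats 1000000

open Subgroup hiding lowerCentralSeries_antitone lowerCentralSeries_one lowerCentralSeries_eq_bot_iff_nilpotencyClass_le lowerCentralSeries_nilpotencyClass
open MulAction Pointwise
open scoped commutatorElement

namespace TranspositionTransfer

variable {G : Type*} [Group G]

/-! ### Commutator and conjugation helpers -/

lemma conj_mem_iff (M : Subgroup G) [M.Normal] {x : G} (r : G) :
    r⁻¹ * x * r ∈ M ↔ x ∈ M := by
  constructor
  · intro h
    have := ‹M.Normal›.conj_mem _ h r
    simpa [mul_assoc] using this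
  · intro h
    have := ‹M.Normal›.conj_mem _ h r⁻¹
    simpa [mul_assoc] using this

/-! ### Evaluation of the transfer map on elements outside a normal subgroup of index 3 -/

section TransferCube

variable (M : Subgroup G) [M.Normal]

lemma index_three_pow_mem (h3 : M.index = 3) (g : G) : g ^ 3 ∈ M := by
  have hcard : Nat.card (G ⧸ M) = 3 := by rw [← h3]; rfl
  have : ((g : G ⧸ M)) ^ 3 = 1 := by
    rw [← hcard]; exact pow_card_eq_one'
  rwa [← QuotientGroup.mk_pow, QuotientGroup.eq_one_iff] at this

lemma minPeriod_eq_three (h3 : M.index = 3) {g : G} (hg : g ∉ M) (q : G ⧸ M) :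
    Function.minimalPeriod (g • ·) q = 3 := by
  have hsmul : ∀ (k : ℕ) (x : G), (g • ·)^[k] ((x : G) : G ⧸ M) = ((g ^ k * x : G) : G ⧸ M) := by
    intro k x
    rw [smul_iterate]
    show (g ^ k) • ((x : G) : G ⧸ M) = _
    rw [MulAction.Quotient.smul_mk]
    rfl
  obtain ⟨x, rfl⟩ := QuotientGroup.mk_surjective q
  have hper : Function.IsPeriodicPt (g • ·) 3 ((x : G) : G ⧸ M) := by
    show (g • ·)^[3] _ = _
    rw [hsmul]
    refine (QuotientGroup.eq (s := M)).mpr ?_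
    have h1 : g ^ 3 ∈ M := index_three_pow_mem M h3 g
    have h2 : x⁻¹ * (g ^ 3)⁻¹ * x ∈ M := by
      have := (conj_mem_iff M x).mpr (inv_mem h1)
      simpa [mul_assoc] using this
    simpa [mul_assoc, mul_inv_rev] using h2
  have hdvd := hper.minimalPeriod_dvd
  have hne1 : Function.minimalPeriod (g • ·) ((x : G) : G ⧸ M) ≠ 1 := by
    intro h1
    have := Function.isPeriodicPt_minimalPeriod (g • ·) ((x : G) : G ⧸ M)
    rw [h1] at this
    have hfix : (g • ·)^[1] ((x : G) : G ⧸ M) = ((x : G) : G ⧸ M) := this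
    rw [hsmul] at hfix
    have := (QuotientGroup.eq (s := M)).mp hfix
    simp only [pow_one, mul_inv_rev] at this
    have hg' : x⁻¹ * g * x ∈ M := by
      have := inv_mem this
      simpa [mul_assoc] using this
    exact hg ((conj_mem_iff M x).mp hg')
  have h30 : (3 : ℕ).Prime := by norm_num
  rcases (Nat.Prime.eq_one_or_self_of_dvd h30 _ hdvd) with h | h
  · exact absurd h hne1
  · exact h

section
variable [Finite G]

lemma orbit_subsingleton (h3 : M.index = 3) {g : G} (hg : g ∉ M) :
    Subsingleton (Quotient (orbitRel (zpowers g) (G ⧸ M))) := by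
  constructor
  intro q1 q2
  obtain ⟨x1, rfl⟩ := Quotient.mk_surjective q1
  obtain ⟨x2, rfl⟩ := Quotient.mk_surjective q2
  refine Quotient.sound ?_
  show x1 ∈ orbit (zpowers g) x2
  have hcard : Nat.card (G ⧸ M) = 3 := by rw [← h3]; rfl
  obtain ⟨y1, rfl⟩ := QuotientGroup.mk_surjective x1
  obtain ⟨y2, rfl⟩ := QuotientGroup.mk_surjective x2
  have hordvd : orderOf ((g : G) : G ⧸ M) ∣ 3 := by
    rw [← hcard]; exact orderOf_dvd_natCard _
  have hor : orderOf ((g : G) : G ⧸ M) = 3 := by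
    rcases (Nat.Prime.eq_one_or_self_of_dvd (by norm_num) _ hordvd) with h | h
    · exfalso
      rw [orderOf_eq_one_iff] at h
      exact hg ((QuotientGroup.eq_one_iff g).mp h)
    · exact h
  have htop : zpowers ((g : G) : G ⧸ M) = ⊤ := by
    apply Subgroup.eq_top_of_card_eq
    rw [Nat.card_zpowers, hor, hcard]
  have hmem : ((y1 : G ⧸ M) * (y2 : G ⧸ M)⁻¹) ∈ zpowers ((g : G) : G ⧸ M) := by
    rw [htop]; trivial
  obtain ⟨k, hk⟩ := hmem
  refine ⟨⟨g, mem_zpowers g⟩ ^ k, ?_⟩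
  show (g ^ k) • ((y2 : G) : G ⧸ M) = ((y1 : G) : G ⧸ M)
  have hgk : ((g ^ k : G) : G ⧸ M) = (y1 : G ⧸ M) * (y2 : G ⧸ M)⁻¹ := by
    rw [← hk]; push_cast; rfl
  rw [MulAction.Quotient.smul_mk]
  show (((g ^ k) * y2 : G) : G ⧸ M) = _
  rw [QuotientGroup.mk_mul, hgk]
  group

lemma transfer_of_index_three {A : Type*} [CommGroup A] (ϕ : ↥M →* A)
    (h3 : M.index = 3) {g : G} (hg : g ∉ M) :
    ∃ r : G, MonoidHom.transfer ϕ g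
      = ϕ ⟨r⁻¹ * g ^ 3 * r, (conj_mem_iff M r).mpr (index_three_pow_mem M h3 g)⟩ := by
  classical
  haveI : Fintype (Quotient (orbitRel (zpowers g) (G ⧸ M))) := Fintype.ofFinite _
  haveI hsub : Subsingleton (Quotient (orbitRel (zpowers g) (G ⧸ M))) :=
    orbit_subsingleton M h3 hg
  haveI : Unique (Quotient (orbitRel (zpowers g) (G ⧸ M))) :=
    uniqueOfSubsingleton (Quotient.mk _ ((1 : G) : G ⧸ M))
  rw [MonoidHom.transfer_eq_prod_quotient_orbitRel_zpowers_quot]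
  rw [Fintype.prod_unique]
  simp only [minPeriod_eq_three M h3 hg]
  exact ⟨_, rfl⟩

lemma mem_commutator_iff_coe {x : ↥M} : x ∈ commutator ↥M ↔ (x : G) ∈ ⁅M, M⁆ := by
  rw [_root_.commutator_def]
  have hinj : Function.Injective M.subtype := Subtype.coe_injective
  have hmap : (⁅(⊤ : Subgroup ↥M), (⊤ : Subgroup ↥M)⁆).map M.subtype
      = ⁅M, M⁆ := by
    rw [Subgroup.map_commutator]
    congr 1 <;>
    · rw [← MonoidHom.range_eq_map, Subgroup.range_subtype]
  rw [← Subgroup.mem_map_iff_mem hinj (K := ⁅(⊤ : Subgroup ↥M), (⊤ : Subgroup ↥M)⁆) (x := x), hmap]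
  rfl

lemma transfer_ab_eq_one_iff (h3 : M.index = 3) {g : G} (hg : g ∉ M) :
    (MonoidHom.transfer (Abelianization.of : ↥M →* Abelianization ↥M)) g = 1
      ↔ g ^ 3 ∈ ⁅M, M⁆ := by
  obtain ⟨r, hr⟩ := transfer_of_index_three M Abelianization.of h3 hg
  rw [hr]
  have h1 : ∀ x : ↥M, ((Abelianization.of x = 1) ↔ x ∈ commutator ↥M) := fun x =>
    QuotientGroup.eq_one_iff x
  rw [h1, mem_commutator_iff_coe]
  show r⁻¹ * g ^ 3 * r ∈ ⁅M, M⁆ ↔ _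
  exact conj_mem_iff ⁅M, M⁆ r

end

end TransferCube

/-! ### Commutator calculus in class-two groups -/

section ClassTwo

variable {Q : Type*} [Group Q]

lemma comm_mul_left (x y z : Q) : ⁅x * y, z⁆ = x * ⁅y, z⁆ * x⁻¹ * ⁅x, z⁆ := by
  simp only [commutatorElement_def]
  group

lemma conj_eq_of_commute {c x : Q} (h : Commute c x) : x * c * x⁻¹ = c := by
  rw [← h.eq]
  group

lemma pow3 (x : Q) : x ^ 3 = x * (x * x) := by
  rw [show (3 : ℕ) = 2 + 1 from rfl, pow_succ, pow_two, mul_assoc]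

lemma comm_pow3 (hQ : ∀ x y z : Q, Commute ⁅x, y⁆ z) (a b : Q) :
    ⁅a ^ 3, b⁆ = ⁅a, b⁆ ^ 3 := by
  have h2 : ⁅a * a, b⁆ = ⁅a, b⁆ * ⁅a, b⁆ := by
    rw [comm_mul_left, conj_eq_of_commute (hQ a b a)]
  rw [pow3 a, comm_mul_left, h2,
    conj_eq_of_commute (Commute.mul_left (hQ a b a) (hQ a b a)), pow3, mul_assoc]

lemma cube_mul (hQ : ∀ x y z : Q, Commute ⁅x, y⁆ z) (a b : Q) :
    (a * b) ^ 3 = ⁅b, a⁆ ^ 3 * (a ^ 3 * b ^ 3) := by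
  set c := ⁅b, a⁆ with hc
  have hba0 : b * a = c * (a * b) := by
    rw [hc]; simp only [commutatorElement_def]; group
  have hba' : ∀ x, b * (a * x) = c * (a * (b * x)) := fun x => by
    rw [← mul_assoc, hba0]; simp only [mul_assoc]
  have ha' : ∀ x, a * (c * x) = c * (a * x) := fun x => by
    rw [← mul_assoc, ← (hQ b a a).eq, mul_assoc]
  have hb' : ∀ x, b * (c * x) = c * (b * x) := fun x => by
    rw [← mul_assoc, ← (hQ b a b).eq, mul_assoc]
  have hL : (a * b) ^ 3 = a * (b * (a * (b * (a * b)))) := by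
    rw [pow3]; simp only [mul_assoc]
  have hR : c ^ 3 * (a ^ 3 * b ^ 3) = c * (c * (c * (a * (a * (a * (b * (b * b))))))) := by
    rw [pow3, pow3 a, pow3 b]; simp only [mul_assoc]
  rw [hL, hR]
  rw [hba', hba', hb', hba', ha', ha', ha']
  rw [ha', ha']

end ClassTwo

/-! ### The lower central series dichotomy -/

lemma commutator_sup_le_right' (H K L : Subgroup G) [K.Normal] [L.Normal]
    [hHL : (⁅H, L⁆ : Subgroup G).Normal] :
    ⁅H, K ⊔ L⁆ ≤ ⁅H, K⁆ ⊔ ⁅H, L⁆ := by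
  rw [Subgroup.commutator_le]
  intro g₁ hg₁ g₂ hg₂
  have hmem : g₂ ∈ ((K : Set G) * (L : Set G)) := by
    rw [← Subgroup.mul_normal]; exact hg₂
  obtain ⟨k, hk, l, hl, rfl⟩ := hmem
  have hid : ⁅g₁, k * l⁆ = ⁅g₁, k⁆ * (k * ⁅g₁, l⁆ * k⁻¹) := by
    simp only [commutatorElement_def]; group
  rw [hid]
  refine mul_mem (Subgroup.mem_sup_left ?_) (Subgroup.mem_sup_right ?_)
  · exact Subgroup.commutator_mem_commutator hg₁ hk
  · exact hHL.conj_mem _ (Subgroup.commutator_mem_commutator hg₁ hl) k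

lemma lcs_stab [Group.IsNilpotent G] {k : ℕ}
    (h : Subgroup.lowerCentralSeries (⊤ : Subgroup G) (k + 1) = Subgroup.lowerCentralSeries (⊤ : Subgroup G) k) :
    Subgroup.lowerCentralSeries (⊤ : Subgroup G) k = ⊥ := by
  have key : ∀ m, Subgroup.lowerCentralSeries (⊤ : Subgroup G) (k + m) = Subgroup.lowerCentralSeries (⊤ : Subgroup G) k := by
    intro m
    induction m with
    | zero => rfl
    | succ d hd =>
      have h1 : Subgroup.lowerCentralSeries (⊤ : Subgroup G) (k + (d + 1)) = ⁅Subgroup.lowerCentralSeries (⊤ : Subgroup G) (k + d), ⊤⁆ := rfl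
      rw [h1, hd]
      exact h
  rcases le_or_gt (Group.nilpotencyClass G) k with hle | hlt
  · exact lowerCentralSeries_eq_bot_iff_nilpotencyClass_le.mpr hle
  · rw [← key (Group.nilpotencyClass G - k), show k + (Group.nilpotencyClass G - k)
      = Group.nilpotencyClass G by omega]
    exact lowerCentralSeries_nilpotencyClass

section Core

variable [Finite G] [Group.IsNilpotent G]

lemma relindex_three_power (hpG : IsPGroup 3 G) (X Y : Subgroup G) :
    ∃ n : ℕ, X.relIndex Y = 3 ^ n := by
  have h2 : (X.subgroupOf Y).index ∣ Nat.card Y := Subgroup.index_dvd_card _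
  obtain ⟨n, hn⟩ := IsPGroup.exists_card_eq (IsPGroup.to_subgroup hpG Y)
  rw [hn] at h2
  obtain ⟨m, _, hm⟩ := (Nat.dvd_prime_pow (by norm_num)).mp h2
  exact ⟨m, hm⟩

/-- The dichotomy: if `|γ₃ : γ₄| ≤ 3` (classical numbering), then `γ₃ ≤ [M,M]` or
`γ₃ ≤ [N,N]`. -/
lemma gamma3_le_commutator_or (hpG : IsPGroup 3 G) (M N : Subgroup G) [M.Normal] [N.Normal]
    (hsup : M ⊔ N = ⊤) (hγ2M : commutator G ≤ M) (hγ2N : commutator G ≤ N)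
    (hrel : (Subgroup.lowerCentralSeries (⊤ : Subgroup G) 3).relIndex (Subgroup.lowerCentralSeries (⊤ : Subgroup G) 2) ≤ 3) :
    Subgroup.lowerCentralSeries (⊤ : Subgroup G) 2 ≤ ⁅M, M⁆ ∨ Subgroup.lowerCentralSeries (⊤ : Subgroup G) 2 ≤ ⁅N, N⁆ := by
  set A : Subgroup G := ⁅commutator G, M⁆ with hA
  set B : Subgroup G := ⁅commutator G, N⁆ with hB
  haveI : A.Normal := Subgroup.commutator_normal _ _
  haveI : B.Normal := Subgroup.commutator_normal _ _
  have hAM : A ≤ ⁅M, M⁆ := Subgroup.commutator_mono hγ2M le_rfl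
  have hBN : B ≤ ⁅N, N⁆ := Subgroup.commutator_mono hγ2N le_rfl
  have hAle : A ≤ Subgroup.lowerCentralSeries (⊤ : Subgroup G) 2 := by
    show (⁅commutator G, M⁆ : Subgroup G) ≤ ⁅Subgroup.lowerCentralSeries (⊤ : Subgroup G) 1, ⊤⁆
    rw [lowerCentralSeries_one]
    exact Subgroup.commutator_mono le_rfl le_top
  have hBle : B ≤ Subgroup.lowerCentralSeries (⊤ : Subgroup G) 2 := by
    show (⁅commutator G, N⁆ : Subgroup G) ≤ ⁅Subgroup.lowerCentralSeries (⊤ : Subgroup G) 1, ⊤⁆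
    rw [lowerCentralSeries_one]
    exact Subgroup.commutator_mono le_rfl le_top
  have hABsup : Subgroup.lowerCentralSeries (⊤ : Subgroup G) 2 ≤ A ⊔ B := by
    have h0 : Subgroup.lowerCentralSeries (⊤ : Subgroup G) 2 = ⁅commutator G, M ⊔ N⁆ := by
      rw [hsup]
      show (⁅Subgroup.lowerCentralSeries (⊤ : Subgroup G) 1, ⊤⁆ : Subgroup G) = _
      rw [lowerCentralSeries_one]
    rw [h0]
    exact commutator_sup_le_right' (commutator G) M N
  have hprop : ∀ (C : Subgroup G), C.Normal →
      Subgroup.lowerCentralSeries (⊤ : Subgroup G) 2 ≤ C ⊔ Subgroup.lowerCentralSeries (⊤ : Subgroup G) 3 →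
      Subgroup.lowerCentralSeries (⊤ : Subgroup G) 2 ≤ C := by
    intro C hC hbase
    haveI := hC
    have hstep : ∀ k, Subgroup.lowerCentralSeries (⊤ : Subgroup G) k ≤ C ⊔ Subgroup.lowerCentralSeries (⊤ : Subgroup G) (k+1) →
        Subgroup.lowerCentralSeries (⊤ : Subgroup G) (k+1) ≤ C ⊔ Subgroup.lowerCentralSeries (⊤ : Subgroup G) (k+2) := by
      intro k hstepk
      have h2 : (⁅Subgroup.lowerCentralSeries (⊤ : Subgroup G) k, ⊤⁆ : Subgroup G)
          ≤ ⁅C ⊔ Subgroup.lowerCentralSeries (⊤ : Subgroup G) (k+1), ⊤⁆ := Subgroup.commutator_mono hstepk le_rfl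
      have h3 : (⁅C ⊔ Subgroup.lowerCentralSeries (⊤ : Subgroup G) (k+1), ⊤⁆ : Subgroup G)
          = ⁅(⊤ : Subgroup G), C ⊔ Subgroup.lowerCentralSeries (⊤ : Subgroup G) (k+1)⁆ := Subgroup.commutator_comm _ _
      have h4 : (⁅(⊤ : Subgroup G), C ⊔ Subgroup.lowerCentralSeries (⊤ : Subgroup G) (k+1)⁆ : Subgroup G)
          ≤ ⁅(⊤ : Subgroup G), C⁆ ⊔ ⁅(⊤ : Subgroup G), Subgroup.lowerCentralSeries (⊤ : Subgroup G) (k+1)⁆ :=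
        commutator_sup_le_right' ⊤ C (Subgroup.lowerCentralSeries (⊤ : Subgroup G) (k+1))
      have h5 : (⁅(⊤ : Subgroup G), C⁆ : Subgroup G) ≤ C := by
        rw [Subgroup.commutator_comm]
        exact Subgroup.commutator_le_left _ _
      have h6 : (⁅(⊤ : Subgroup G), Subgroup.lowerCentralSeries (⊤ : Subgroup G) (k+1)⁆ : Subgroup G)
          ≤ Subgroup.lowerCentralSeries (⊤ : Subgroup G) (k+2) := by
        rw [Subgroup.commutator_comm]
        exact le_rfl
      calc Subgroup.lowerCentralSeries (⊤ : Subgroup G) (k+1) = ⁅Subgroup.lowerCentralSeries (⊤ : Subgroup G) k, ⊤⁆ := rfl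
        _ ≤ ⁅(⊤ : Subgroup G), C⁆ ⊔ ⁅(⊤ : Subgroup G), Subgroup.lowerCentralSeries (⊤ : Subgroup G) (k+1)⁆ :=
            le_trans h2 (le_trans (le_of_eq h3) h4)
        _ ≤ C ⊔ Subgroup.lowerCentralSeries (⊤ : Subgroup G) (k+2) := sup_le_sup h5 h6
    have hstep2 : ∀ j, Subgroup.lowerCentralSeries (⊤ : Subgroup G) (2+j) ≤ C ⊔ Subgroup.lowerCentralSeries (⊤ : Subgroup G) (3+j) := by
      intro j
      induction j with
      | zero => exact hbase
      | succ d hd =>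
        have hd' : Subgroup.lowerCentralSeries (⊤ : Subgroup G) (2+d) ≤ C ⊔ Subgroup.lowerCentralSeries (⊤ : Subgroup G) (2+d+1) := by
          rw [show 2 + d + 1 = 3 + d by omega]; exact hd
        have := hstep (2+d) hd'
        rw [show 2 + d + 1 = 2 + (d+1) by omega, show 2 + d + 2 = 3 + (d+1) by omega] at this
        exact this
    have hchain : ∀ j, Subgroup.lowerCentralSeries (⊤ : Subgroup G) 2 ≤ C ⊔ Subgroup.lowerCentralSeries (⊤ : Subgroup G) (3+j) := by
      intro j
      induction j with
      | zero => exact hbase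
      | succ d hd =>
        have h2 := hstep2 (d+1)
        rw [show 2 + (d+1) = 3 + d by omega] at h2
        calc Subgroup.lowerCentralSeries (⊤ : Subgroup G) 2 ≤ C ⊔ Subgroup.lowerCentralSeries (⊤ : Subgroup G) (3+d) := hd
          _ ≤ C ⊔ (C ⊔ Subgroup.lowerCentralSeries (⊤ : Subgroup G) (3+(d+1))) := sup_le_sup le_rfl h2
          _ = C ⊔ Subgroup.lowerCentralSeries (⊤ : Subgroup G) (3+(d+1)) := by rw [← sup_assoc, sup_idem]
    have hfin := hchain (Group.nilpotencyClass G)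
    have hbot : Subgroup.lowerCentralSeries (⊤ : Subgroup G) (3 + Group.nilpotencyClass G) = ⊥ :=
      lowerCentralSeries_eq_bot_iff_nilpotencyClass_le.mpr (by omega)
    rw [hbot, sup_bot_eq] at hfin
    exact hfin
  by_cases hX : Subgroup.lowerCentralSeries (⊤ : Subgroup G) 2 ≤ A ⊔ Subgroup.lowerCentralSeries (⊤ : Subgroup G) 3
  · left; exact le_trans (hprop A inferInstance hX) hAM
  by_cases hY : Subgroup.lowerCentralSeries (⊤ : Subgroup G) 2 ≤ B ⊔ Subgroup.lowerCentralSeries (⊤ : Subgroup G) 3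
  · right; exact le_trans (hprop B inferInstance hY) hBN
  have hL32 : Subgroup.lowerCentralSeries (⊤ : Subgroup G) 3 ≤ Subgroup.lowerCentralSeries (⊤ : Subgroup G) 2 :=
    lowerCentralSeries_antitone ⊤ (by omega)
  have hkey : ∀ (C : Subgroup G), C ≤ Subgroup.lowerCentralSeries (⊤ : Subgroup G) 2 →
      ¬ (Subgroup.lowerCentralSeries (⊤ : Subgroup G) 2 ≤ C ⊔ Subgroup.lowerCentralSeries (⊤ : Subgroup G) 3) →
      C ≤ Subgroup.lowerCentralSeries (⊤ : Subgroup G) 3 := by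
    intro C hCle hnle
    set X : Subgroup G := C ⊔ Subgroup.lowerCentralSeries (⊤ : Subgroup G) 3 with hXdef
    have hXle : X ≤ Subgroup.lowerCentralSeries (⊤ : Subgroup G) 2 := sup_le hCle hL32
    have hL3X : Subgroup.lowerCentralSeries (⊤ : Subgroup G) 3 ≤ X := le_sup_right
    have hmul := Subgroup.relIndex_mul_relIndex (Subgroup.lowerCentralSeries (⊤ : Subgroup G) 3) X
      (Subgroup.lowerCentralSeries (⊤ : Subgroup G) 2) hL3X hXle
    have hne1 : X.relIndex (Subgroup.lowerCentralSeries (⊤ : Subgroup G) 2) ≠ 1 := fun h =>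
      hnle (Subgroup.relIndex_eq_one.mp h)
    obtain ⟨n, hn⟩ := relindex_three_power hpG X (Subgroup.lowerCentralSeries (⊤ : Subgroup G) 2)
    have hn1 : 1 ≤ n := by
      by_contra h
      push_neg at h
      interval_cases n
      · simp at hn; exact hnle hn
    have hge3 : 3 ≤ X.relIndex (Subgroup.lowerCentralSeries (⊤ : Subgroup G) 2) := by
      rw [hn]
      calc 3 = 3 ^ 1 := by norm_num
        _ ≤ 3 ^ n := Nat.pow_le_pow_right (by norm_num) hn1
    have hpos : (Subgroup.lowerCentralSeries (⊤ : Subgroup G) 3).relIndex X ≠ 0 := Subgroup.index_ne_zero_of_finite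
    have h1 : (Subgroup.lowerCentralSeries (⊤ : Subgroup G) 3).relIndex X = 1 := by
      by_contra hne
      have h2 : 2 ≤ (Subgroup.lowerCentralSeries (⊤ : Subgroup G) 3).relIndex X := by omega
      have : 6 ≤ (Subgroup.lowerCentralSeries (⊤ : Subgroup G) 3).relIndex X * X.relIndex (Subgroup.lowerCentralSeries (⊤ : Subgroup G) 2) :=
        Nat.mul_le_mul h2 hge3
      omega
    have := Subgroup.relIndex_eq_one.mp h1
    exact le_trans le_sup_left this
  have hA3 : A ≤ Subgroup.lowerCentralSeries (⊤ : Subgroup G) 3 := hkey A hAle hX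
  have hB3 : B ≤ Subgroup.lowerCentralSeries (⊤ : Subgroup G) 3 := hkey B hBle hY
  have hL23 : Subgroup.lowerCentralSeries (⊤ : Subgroup G) 2 ≤ Subgroup.lowerCentralSeries (⊤ : Subgroup G) 3 :=
    le_trans hABsup (sup_le hA3 hB3)
  have heq : Subgroup.lowerCentralSeries (⊤ : Subgroup G) 3 = Subgroup.lowerCentralSeries (⊤ : Subgroup G) 2 := le_antisymm hL32 hL23
  have hbot : Subgroup.lowerCentralSeries (⊤ : Subgroup G) 2 = ⊥ := lcs_stab heq
  left
  rw [hbot]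
  exact bot_le

end Core

end TranspositionTransfer

lemma cube_eq_one_zmod3 :
    ∀ x : (Multiplicative (ZMod 3) × Multiplicative (ZMod 3)), x ^ 3 = 1 := by decide

/-- Let `G` be a finite `3`-group whose commutator quotient `G/[G,G]` is isomorphic to
`C₃ × C₃`, and let `M ≠ N` be maximal subgroups of `G` such that the kernel of the Artin
transfer `V_M : G → M/[M,M]` equals `N` and the kernel of the Artin transfer
`V_N : G → N/[N,N]` equals `M` (a transposition in the transfer kernel type).
Then `|G| ≥ 3⁵ = 243` and `G` is not of maximal class: its coclass is at least `2`,
i.e. if `|G| = 3^n` then `cl(G) + 2 ≤ n`. -/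
theorem transposition_forces_coclass_at_least_two
    (G : Type*) [Group G] [Finite G] [Group.IsNilpotent G]
    (hpG : IsPGroup 3 G)
    (hab : Nonempty (Abelianization G ≃* (Multiplicative (ZMod 3) × Multiplicative (ZMod 3))))
    (M N : Subgroup G) (hMN : M ≠ N)
    (hMmax : IsCoatom M) (hNmax : IsCoatom N)
    (hkerM : (MonoidHom.transfer (Abelianization.of : M →* Abelianization M)).ker = N)
    (hkerN : (MonoidHom.transfer (Abelianization.of : N →* Abelianization N)).ker = M) :
    3 ^ 5 ≤ Nat.card G ∧
      ∀ n : ℕ, Nat.card G = 3 ^ n → Group.nilpotencyClass G + 2 ≤ n := by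
  classical
  obtain ⟨e⟩ := hab
  haveI : Fact (Nat.Prime 3) := ⟨by norm_num⟩
  haveI hMn : M.Normal := hkerN ▸ MonoidHom.normal_ker _
  haveI hNn : N.Normal := hkerM ▸ MonoidHom.normal_ker _
  -- the abelianization has exponent 3
  have h3ab : ∀ a : Abelianization G, a ^ 3 = 1 := by
    intro a
    apply e.injective
    rw [map_pow, map_one]
    exact cube_eq_one_zmod3 (e a)
  have hcube : ∀ g : G, g ^ 3 ∈ commutator G := by
    intro g
    have h1 : Abelianization.of (g ^ 3) = 1 := by
      rw [map_pow]; exact h3ab _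
    exact (QuotientGroup.eq_one_iff _).mp h1
  have hcardAb : Nat.card (Abelianization G) = 9 := by
    rw [Nat.card_congr e.toEquiv, Nat.card_prod]
    have h1 : Nat.card (Multiplicative (ZMod 3)) = 3 := by
      rw [Nat.card_eq_fintype_card]
      rfl
    rw [h1]
  -- each coatom is normal of index 3
  have hidx : ∀ (P : Subgroup G), P.Normal → IsCoatom P → P.index = 3 := by
    intro P hPn hPc
    haveI := hPn
    have hne : ∃ x : G, x ∉ P := by
      by_contra h
      push_neg at h
      exact hPc.1 ((Subgroup.eq_top_iff' _).mpr h)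
    obtain ⟨x0, hx0⟩ := hne
    haveI : Nontrivial (G ⧸ P) := ⟨⟨((x0 : G) : G ⧸ P), 1, by
      intro h
      exact hx0 ((QuotientGroup.eq_one_iff _).mp h)⟩⟩
    have hpQ : IsPGroup 3 (G ⧸ P) := hpG.to_quotient P
    obtain ⟨k, hk⟩ := IsPGroup.iff_card.mp hpQ
    have hk1 : 1 ≤ k := by
      by_contra h
      push_neg at h
      interval_cases k
      · rw [pow_zero] at hk
        have := Finite.one_lt_card_iff_nontrivial.mpr ‹Nontrivial (G ⧸ P)›
        omega
    have hdvd3 : 3 ∣ Nat.card (G ⧸ P) := by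
      rw [hk]
      exact dvd_pow_self 3 (by omega)
    obtain ⟨q, hq⟩ := exists_prime_orderOf_dvd_card' (G := G ⧸ P) 3 hdvd3
    obtain ⟨x, rfl⟩ := QuotientGroup.mk_surjective q
    have hxP : x ∉ P := by
      intro h
      rw [(QuotientGroup.eq_one_iff x).mpr h, orderOf_one] at hq
      omega
    have hPlt : P < P ⊔ Subgroup.zpowers x := by
      refine lt_of_le_of_ne le_sup_left ?_
      intro h
      apply hxP
      have : Subgroup.zpowers x ≤ P := by
        rw [h]
        exact le_sup_right
      exact this (Subgroup.mem_zpowers x)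
    have htop := hPc.2 _ hPlt
    have hZ : Subgroup.zpowers ((x : G) : G ⧸ P) = ⊤ := by
      rw [Subgroup.eq_top_iff']
      intro z
      obtain ⟨g, rfl⟩ := QuotientGroup.mk_surjective z
      have hg1 : g ∈ P ⊔ Subgroup.zpowers x := by
        rw [htop]; trivial
      have hg2 : g ∈ ((Subgroup.zpowers x : Set G) * (P : Set G)) := by
        rw [← Subgroup.mul_normal (Subgroup.zpowers x) P, sup_comm]
        exact hg1
      obtain ⟨y, hy, p, hp, rfl⟩ := hg2
      obtain ⟨k', rfl⟩ := hy
      show ((x ^ k' * p : G) : G ⧸ P) ∈ _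
      rw [QuotientGroup.mk_mul, (QuotientGroup.eq_one_iff p).mpr hp, mul_one]
      exact ⟨k', by push_cast; rfl⟩
    show Nat.card (G ⧸ P) = 3
    rw [← hq, ← Nat.card_zpowers, hZ]
    exact Subgroup.card_top.symm
  -- index-3 subgroups contain the commutator subgroup
  have hcommle : ∀ (P : Subgroup G), P.Normal → P.index = 3 → commutator G ≤ P := by
    intro P hPn hP3
    haveI := hPn
    have hcard3 : Nat.card (G ⧸ P) = 3 := hP3
    haveI : IsCyclic (G ⧸ P) := isCyclic_of_prime_card hcard3
    letI : CommGroup (G ⧸ P) := IsCyclic.commGroup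
    rw [commutator_def, Subgroup.commutator_le]
    intro g₁ _ g₂ _
    have h1 : ((⁅g₁, g₂⁆ : G) : G ⧸ P) = 1 := by
      have h2 : ((⁅g₁, g₂⁆ : G) : G ⧸ P)
          = ⁅((g₁ : G) : G ⧸ P), ((g₂ : G) : G ⧸ P)⁆ :=
        map_commutatorElement (QuotientGroup.mk' P) g₁ g₂
      rw [h2]
      exact commutatorElement_eq_one_iff_commute.mpr (mul_comm _ _)
    exact (QuotientGroup.eq_one_iff _).mp h1
  have hM3 : M.index = 3 := hidx M hMn hMmax
  have hN3 : N.index = 3 := hidx N hNn hNmax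
  have hcommM : commutator G ≤ M := hcommle M hMn hM3
  have hcommN : commutator G ≤ N := hcommle N hNn hN3
  -- choose generators s ∈ M \ N, t ∈ N \ M
  have hMnleN : ¬ M ≤ N := by
    intro h
    rcases eq_or_lt_of_le h with he | hl
    · exact hMN he
    · exact hNmax.1 (hMmax.2 N hl)
  have hNnleM : ¬ N ≤ M := by
    intro h
    rcases eq_or_lt_of_le h with he | hl
    · exact hMN he.symm
    · exact hMmax.1 (hNmax.2 M hl)
  obtain ⟨s, hsM, hsN⟩ := SetLike.not_le_iff_exists.mp hMnleN
  obtain ⟨t, htN, htM⟩ := SetLike.not_le_iff_exists.mp hNnleM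
  have hsupMN : M ⊔ N = ⊤ := by
    apply hMmax.2
    refine lt_of_le_of_ne le_sup_left ?_
    intro h
    exact hNnleM (h ▸ le_sup_right)
  -- transfer conditions
  have hs3N' : s ^ 3 ∈ ⁅N, N⁆ := by
    have h1 : MonoidHom.transfer (Abelianization.of : N →* Abelianization N) s = 1 := by
      have h2 : s ∈ (MonoidHom.transfer (Abelianization.of : N →* Abelianization N)).ker := by
        rw [hkerN]; exact hsM
      exact h2
    exact (TranspositionTransfer.transfer_ab_eq_one_iff N hN3 hsN).mp h1
  have ht3M' : t ^ 3 ∈ ⁅M, M⁆ := by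
    have h1 : MonoidHom.transfer (Abelianization.of : M →* Abelianization M) t = 1 := by
      have h2 : t ∈ (MonoidHom.transfer (Abelianization.of : M →* Abelianization M)).ker := by
        rw [hkerM]; exact htN
      exact h2
    exact (TranspositionTransfer.transfer_ab_eq_one_iff M hM3 htM).mp h1
  -- decomposition of elements of an index-3 subgroup
  have hdecomp : ∀ (P : Subgroup G), IsCoatom P → commutator G ≤ P →
      ∀ w, w ∈ P → w ∉ commutator G →
      ∀ m ∈ P, ∃ (k : ℤ) (u : G), u ∈ commutator G ∧ m = w ^ k * u := by
    intro P hPc hPcomm w hwP hwC m hm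
    have hord : orderOf (Abelianization.of w) = 3 := by
      apply orderOf_eq_prime
      · rw [← map_pow]
        exact (QuotientGroup.eq_one_iff _).mpr (hcube w)
      · intro h
        exact hwC ((QuotientGroup.eq_one_iff _).mp h)
    set W : Subgroup (Abelianization G) := Subgroup.map Abelianization.of P with hW
    have hzleW : Subgroup.zpowers (Abelianization.of w) ≤ W := by
      rw [Subgroup.zpowers_le]
      exact Subgroup.mem_map_of_mem _ hwP
    have hWne : W ≠ ⊤ := by
      intro h
      apply hPc.1
      rw [Subgroup.eq_top_iff']
      intro g
      have : Abelianization.of g ∈ W := by rw [h]; trivial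
      obtain ⟨m', hm', hmeq⟩ := this
      have : Abelianization.of (m'⁻¹ * g) = 1 := by
        rw [map_mul, map_inv, hmeq]
        group
      have h2 : m'⁻¹ * g ∈ commutator G := (QuotientGroup.eq_one_iff _).mp this
      have h3 : m'⁻¹ * g ∈ P := hPcomm h2
      have := P.mul_mem hm' h3
      simpa using this
    have hcardW : Nat.card W ≤ 3 := by
      have hdvd : Nat.card W ∣ 9 := by
        rw [← hcardAb]
        exact Subgroup.card_subgroup_dvd_card W
      have h9 : (9 : ℕ) = 3 ^ 2 := by norm_num
      rw [h9] at hdvd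
      obtain ⟨j, hj, hjeq⟩ := (Nat.dvd_prime_pow (by norm_num)).mp hdvd
      have hjne : j ≠ 2 := by
        intro h2
        apply hWne
        apply Subgroup.eq_top_of_card_eq
        rw [hjeq, h2, hcardAb]
        norm_num
      have : j ≤ 1 := by omega
      calc Nat.card W = 3 ^ j := hjeq
        _ ≤ 3 ^ 1 := Nat.pow_le_pow_right (by norm_num) this
        _ = 3 := by norm_num
    have hWz : Subgroup.zpowers (Abelianization.of w) = W := by
      apply Subgroup.eq_of_le_of_card_ge hzleW
      rw [Nat.card_zpowers, hord]
      exact hcardW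
    have hmW : Abelianization.of m ∈ W := Subgroup.mem_map_of_mem _ hm
    rw [← hWz] at hmW
    obtain ⟨k, hk⟩ := Subgroup.mem_zpowers_iff.mp hmW
    refine ⟨k, (w ^ k)⁻¹ * m, ?_, by group⟩
    apply (QuotientGroup.eq_one_iff _).mp
    show Abelianization.of ((w ^ k)⁻¹ * m) = 1
    rw [map_mul, map_inv, map_zpow, hk]
    group
  -- centrality of commutator-images in G / γ₃
  have hcentral : ∀ u, u ∈ commutator G → ∀ z : G,
      Commute ((u : G) : G ⧸ Subgroup.lowerCentralSeries (⊤ : Subgroup G) 2) ((z : G) : G ⧸ Subgroup.lowerCentralSeries (⊤ : Subgroup G) 2) := by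
    intro u hu z
    have h1 : (⁅u, z⁆ : G) ∈ Subgroup.lowerCentralSeries (⊤ : Subgroup G) 2 := by
      show (⁅u, z⁆ : G) ∈ ⁅Subgroup.lowerCentralSeries (⊤ : Subgroup G) 1, ⊤⁆
      apply Subgroup.commutator_mem_commutator _ (Subgroup.mem_top z)
      rw [lowerCentralSeries_one]
      exact hu
    apply commutatorElement_eq_one_iff_commute.mp
    have h2 : ⁅((u : G) : G ⧸ Subgroup.lowerCentralSeries (⊤ : Subgroup G) 2), ((z : G) : G ⧸ Subgroup.lowerCentralSeries (⊤ : Subgroup G) 2)⁆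
        = ((⁅u, z⁆ : G) : G ⧸ Subgroup.lowerCentralSeries (⊤ : Subgroup G) 2) :=
      (map_commutatorElement (QuotientGroup.mk' (Subgroup.lowerCentralSeries (⊤ : Subgroup G) 2)) u z).symm
    rw [h2]
    exact (QuotientGroup.eq_one_iff _).mpr h1
  have hQ2 : ∀ x y z : G ⧸ Subgroup.lowerCentralSeries (⊤ : Subgroup G) 2, Commute ⁅x, y⁆ z := by
    intro x y z
    obtain ⟨a, rfl⟩ := QuotientGroup.mk_surjective x
    obtain ⟨b, rfl⟩ := QuotientGroup.mk_surjective y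
    obtain ⟨c, rfl⟩ := QuotientGroup.mk_surjective z
    have h2 : ⁅((a : G) : G ⧸ Subgroup.lowerCentralSeries (⊤ : Subgroup G) 2), ((b : G) : G ⧸ Subgroup.lowerCentralSeries (⊤ : Subgroup G) 2)⁆
        = ((⁅a, b⁆ : G) : G ⧸ Subgroup.lowerCentralSeries (⊤ : Subgroup G) 2) :=
      (map_commutatorElement (QuotientGroup.mk' (Subgroup.lowerCentralSeries (⊤ : Subgroup G) 2)) a b).symm
    rw [h2]
    apply hcentral
    rw [commutator_def]
    exact Subgroup.commutator_mem_commutator (Subgroup.mem_top a) (Subgroup.mem_top b)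
  -- commutator subgroups of M and N are contained in γ₃ = Subgroup.lowerCentralSeries (⊤ : Subgroup G) 2
  have hcommle2 : ∀ (P : Subgroup G), IsCoatom P → commutator G ≤ P →
      ∀ w, w ∈ P → w ∉ commutator G → (⁅P, P⁆ : Subgroup G) ≤ Subgroup.lowerCentralSeries (⊤ : Subgroup G) 2 := by
    intro P hPc hPcomm w hwP hwC
    rw [Subgroup.commutator_le]
    intro m₁ h₁ m₂ h₂
    obtain ⟨k₁, u₁, hu₁, rfl⟩ := hdecomp P hPc hPcomm w hwP hwC m₁ h₁
    obtain ⟨k₂, u₂, hu₂, rfl⟩ := hdecomp P hPc hPcomm w hwP hwC m₂ h₂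
    apply (QuotientGroup.eq_one_iff _).mp
    have h2 : ((⁅w ^ k₁ * u₁, w ^ k₂ * u₂⁆ : G) : G ⧸ Subgroup.lowerCentralSeries (⊤ : Subgroup G) 2)
        = ⁅((w ^ k₁ * u₁ : G) : G ⧸ Subgroup.lowerCentralSeries (⊤ : Subgroup G) 2),
            ((w ^ k₂ * u₂ : G) : G ⧸ Subgroup.lowerCentralSeries (⊤ : Subgroup G) 2)⁆ :=
      map_commutatorElement (QuotientGroup.mk' (Subgroup.lowerCentralSeries (⊤ : Subgroup G) 2)) _ _
    rw [h2]
    apply commutatorElement_eq_one_iff_commute.mpr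
    have hcast : ∀ (k : ℤ) (u : G), ((w ^ k * u : G) : G ⧸ Subgroup.lowerCentralSeries (⊤ : Subgroup G) 2)
        = ((w : G) : G ⧸ Subgroup.lowerCentralSeries (⊤ : Subgroup G) 2) ^ k * ((u : G) : G ⧸ Subgroup.lowerCentralSeries (⊤ : Subgroup G) 2) := by
      intro k u
      rfl
    rw [hcast, hcast]
    have hww : Commute (((w : G) : G ⧸ Subgroup.lowerCentralSeries (⊤ : Subgroup G) 2) ^ k₁)
        (((w : G) : G ⧸ Subgroup.lowerCentralSeries (⊤ : Subgroup G) 2) ^ k₂) := (Commute.refl _).zpow_zpow k₁ k₂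
    have hwu₂ : Commute (((w : G) : G ⧸ Subgroup.lowerCentralSeries (⊤ : Subgroup G) 2) ^ k₁)
        ((u₂ : G) : G ⧸ Subgroup.lowerCentralSeries (⊤ : Subgroup G) 2) := by
      have := (hcentral u₂ hu₂ (w ^ k₁)).symm
      have hc : ((w ^ k₁ : G) : G ⧸ Subgroup.lowerCentralSeries (⊤ : Subgroup G) 2)
          = ((w : G) : G ⧸ Subgroup.lowerCentralSeries (⊤ : Subgroup G) 2) ^ k₁ := rfl
      rwa [hc] at this
    have hu₁w : Commute ((u₁ : G) : G ⧸ Subgroup.lowerCentralSeries (⊤ : Subgroup G) 2)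
        (((w : G) : G ⧸ Subgroup.lowerCentralSeries (⊤ : Subgroup G) 2) ^ k₂) := by
      have := hcentral u₁ hu₁ (w ^ k₂)
      have hc : ((w ^ k₂ : G) : G ⧸ Subgroup.lowerCentralSeries (⊤ : Subgroup G) 2)
          = ((w : G) : G ⧸ Subgroup.lowerCentralSeries (⊤ : Subgroup G) 2) ^ k₂ := rfl
      rwa [hc] at this
    have hu₁u₂ : Commute ((u₁ : G) : G ⧸ Subgroup.lowerCentralSeries (⊤ : Subgroup G) 2)
        ((u₂ : G) : G ⧸ Subgroup.lowerCentralSeries (⊤ : Subgroup G) 2) := hcentral u₁ hu₁ u₂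
    exact Commute.mul_left (Commute.mul_right hww hwu₂) (Commute.mul_right hu₁w hu₁u₂)
  have hsC : s ∉ commutator G := fun hc => hsN (hcommN hc)
  have htC : t ∉ commutator G := fun hc => htM (hcommM hc)
  have hM'le : (⁅M, M⁆ : Subgroup G) ≤ Subgroup.lowerCentralSeries (⊤ : Subgroup G) 2 :=
    hcommle2 M hMmax hcommM s hsM hsC
  have hN'le : (⁅N, N⁆ : Subgroup G) ≤ Subgroup.lowerCentralSeries (⊤ : Subgroup G) 2 :=
    hcommle2 N hNmax hcommN t htN htC
  -- the cube of s*t lies in γ₃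
  have hst3 : (s * t) ^ 3 ∈ Subgroup.lowerCentralSeries (⊤ : Subgroup G) 2 := by
    apply (QuotientGroup.eq_one_iff _).mp
    have h1 : (((s * t) ^ 3 : G) : G ⧸ Subgroup.lowerCentralSeries (⊤ : Subgroup G) 2)
        = (((s : G) : G ⧸ Subgroup.lowerCentralSeries (⊤ : Subgroup G) 2) * ((t : G) : G ⧸ Subgroup.lowerCentralSeries (⊤ : Subgroup G) 2)) ^ 3 :=
      rfl
    rw [h1, TranspositionTransfer.cube_mul hQ2]
    have hs1 : ((s : G) : G ⧸ Subgroup.lowerCentralSeries (⊤ : Subgroup G) 2) ^ 3 = 1 := by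
      have : ((s ^ 3 : G) : G ⧸ Subgroup.lowerCentralSeries (⊤ : Subgroup G) 2) = 1 :=
        (QuotientGroup.eq_one_iff _).mpr (hN'le hs3N')
      rw [← this]
      rfl
    have ht1 : ((t : G) : G ⧸ Subgroup.lowerCentralSeries (⊤ : Subgroup G) 2) ^ 3 = 1 := by
      have : ((t ^ 3 : G) : G ⧸ Subgroup.lowerCentralSeries (⊤ : Subgroup G) 2) = 1 :=
        (QuotientGroup.eq_one_iff _).mpr (hM'le ht3M')
      rw [← this]
      rfl
    rw [← TranspositionTransfer.comm_pow3 hQ2, ht1, hs1]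
    simp
    exact (congrArg₂ (· * ·) (commutatorElement_eq_one_iff_commute.mpr (Commute.one_left _))
      (mul_one 1)).trans (mul_one 1)
  -- the main dichotomy: the relative index of γ₄ in γ₃ is at least 4
  have hd3 : ¬ ((Subgroup.lowerCentralSeries (⊤ : Subgroup G) 3).relIndex (Subgroup.lowerCentralSeries (⊤ : Subgroup G) 2) ≤ 3) := by
    intro hrel
    rcases TranspositionTransfer.gamma3_le_commutator_or hpG M N hsupMN hcommM hcommN hrel
      with hc | hc
    · -- γ₃ ≤ [M,M] : the transfer V_M kills s*t, so s*t ∈ N, contradiction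
      have hstM : s * t ∉ M := by
        intro h
        have := M.mul_mem (M.inv_mem hsM) h
        simp only [inv_mul_cancel_left] at this
        exact htM this
      have hV : MonoidHom.transfer (Abelianization.of : M →* Abelianization M) (s * t) = 1 :=
        (TranspositionTransfer.transfer_ab_eq_one_iff M hM3 hstM).mpr (hc hst3)
      have hmem : s * t ∈ N := by
        rw [← hkerM]
        exact hV
      have := N.mul_mem hmem (N.inv_mem htN)
      simp only [mul_inv_cancel_right] at this
      exact hsN this
    · -- γ₃ ≤ [N,N] : the transfer V_N kills s*t, so s*t ∈ M, contradiction
      have hstN : s * t ∉ N := by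
        intro h
        have := N.mul_mem h (N.inv_mem htN)
        simp only [mul_inv_cancel_right] at this
        exact hsN this
      have hV : MonoidHom.transfer (Abelianization.of : N →* Abelianization N) (s * t) = 1 :=
        (TranspositionTransfer.transfer_ab_eq_one_iff N hN3 hstN).mpr (hc hst3)
      have hmem : s * t ∈ M := by
        rw [← hkerN]
        exact hV
      have := M.mul_mem (M.inv_mem hsM) hmem
      simp only [inv_mul_cancel_left] at this
      exact htM this
  -- numerics
  have hd3ge : 9 ≤ (Subgroup.lowerCentralSeries (⊤ : Subgroup G) 3).relIndex (Subgroup.lowerCentralSeries (⊤ : Subgroup G) 2) := by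
    obtain ⟨n, hn⟩ := TranspositionTransfer.relindex_three_power hpG
      (Subgroup.lowerCentralSeries (⊤ : Subgroup G) 3) (Subgroup.lowerCentralSeries (⊤ : Subgroup G) 2)
    have : ¬ (3 ^ n ≤ 3) := by rw [← hn]; exact hd3
    have hn2 : 2 ≤ n := by
      by_contra h
      push_neg at h
      interval_cases n <;> simp_all
    rw [hn]
    calc (9 : ℕ) = 3 ^ 2 := by norm_num
      _ ≤ 3 ^ n := Nat.pow_le_pow_right (by norm_num) hn2
  -- lower central series numerics
  have hstrict : ∀ k, k < Group.nilpotencyClass G →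
      3 ≤ (Subgroup.lowerCentralSeries (⊤ : Subgroup G) (k+1)).relIndex (Subgroup.lowerCentralSeries (⊤ : Subgroup G) k) := by
    intro k hk
    have hne : Subgroup.lowerCentralSeries (⊤ : Subgroup G) (k+1) ≠ Subgroup.lowerCentralSeries (⊤ : Subgroup G) k := by
      intro h
      have hb := TranspositionTransfer.lcs_stab h
      have := lowerCentralSeries_eq_bot_iff_nilpotencyClass_le.mp hb
      omega
    obtain ⟨n, hn⟩ := TranspositionTransfer.relindex_three_power hpG
      (Subgroup.lowerCentralSeries (⊤ : Subgroup G) (k+1)) (Subgroup.lowerCentralSeries (⊤ : Subgroup G) k)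
    have hne1 : (Subgroup.lowerCentralSeries (⊤ : Subgroup G) (k+1)).relIndex (Subgroup.lowerCentralSeries (⊤ : Subgroup G) k) ≠ 1 := by
      intro h1
      apply hne
      apply le_antisymm (lowerCentralSeries_antitone ⊤ (by omega))
      exact Subgroup.relIndex_eq_one.mp h1
    have hn1 : 1 ≤ n := by
      by_contra h
      push_neg at h
      interval_cases n
      · simp at hn
        exact hne (le_antisymm (lowerCentralSeries_antitone ⊤ (by omega)) hn)
    rw [hn]
    calc (3:ℕ) = 3 ^ 1 := by norm_num
      _ ≤ 3 ^ n := Nat.pow_le_pow_right (by norm_num) hn1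
  have hc3 : 3 ≤ Group.nilpotencyClass G := by
    by_contra h
    push_neg at h
    have h2 : Subgroup.lowerCentralSeries (⊤ : Subgroup G) 2 = ⊥ :=
      lowerCentralSeries_eq_bot_iff_nilpotencyClass_le.mpr (by omega)
    have h3 : Subgroup.lowerCentralSeries (⊤ : Subgroup G) 3 = ⊥ :=
      lowerCentralSeries_eq_bot_iff_nilpotencyClass_le.mpr (by omega)
    rw [h2, h3, Subgroup.relIndex_self] at hd3ge
    omega
  have hcard_step : ∀ k, Nat.card (Subgroup.lowerCentralSeries (⊤ : Subgroup G) k)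
      = (Subgroup.lowerCentralSeries (⊤ : Subgroup G) (k+1)).relIndex (Subgroup.lowerCentralSeries (⊤ : Subgroup G) k)
        * Nat.card (Subgroup.lowerCentralSeries (⊤ : Subgroup G) (k+1)) := by
    intro k
    have hle : Subgroup.lowerCentralSeries (⊤ : Subgroup G) (k+1) ≤ Subgroup.lowerCentralSeries (⊤ : Subgroup G) k :=
      lowerCentralSeries_antitone ⊤ (by omega)
    have h1 := Subgroup.index_mul_card
      ((Subgroup.lowerCentralSeries (⊤ : Subgroup G) (k+1)).subgroupOf (Subgroup.lowerCentralSeries (⊤ : Subgroup G) k))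
    rw [← h1]
    congr 1
    exact (Nat.card_congr (Subgroup.subgroupOfEquivOfLe hle).toEquiv)
  have hchainpow : ∀ j, j + 3 ≤ Group.nilpotencyClass G →
      3 ^ j ≤ Nat.card (Subgroup.lowerCentralSeries (⊤ : Subgroup G) (Group.nilpotencyClass G - j)) := by
    intro j
    induction j with
    | zero =>
      intro _
      simp only [pow_zero, Nat.sub_zero]
      have : Nat.card (Subgroup.lowerCentralSeries (⊤ : Subgroup G) (Group.nilpotencyClass G)) = 1 := by
        rw [lowerCentralSeries_nilpotencyClass]
        exact Subgroup.card_bot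
      omega
    | succ d hd =>
      intro hdc
      have hd' := hd (by omega)
      set k := Group.nilpotencyClass G - (d + 1) with hkdef
      have hk1 : k + 1 = Group.nilpotencyClass G - d := by omega
      have hkc : k < Group.nilpotencyClass G := by omega
      have hd'' : 3 ^ d ≤ Nat.card (Subgroup.lowerCentralSeries (⊤ : Subgroup G) (k+1)) := by rw [hk1]; exact hd'
      calc 3 ^ (d+1) = 3 * 3 ^ d := by ring
        _ ≤ (Subgroup.lowerCentralSeries (⊤ : Subgroup G) (k+1)).relIndex (Subgroup.lowerCentralSeries (⊤ : Subgroup G) k)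
            * Nat.card (Subgroup.lowerCentralSeries (⊤ : Subgroup G) (k+1)) :=
            Nat.mul_le_mul (hstrict k hkc) hd''
        _ = Nat.card (Subgroup.lowerCentralSeries (⊤ : Subgroup G) k) := (hcard_step k).symm
  have hcardL3 : 3 ^ (Group.nilpotencyClass G - 3) ≤ Nat.card (Subgroup.lowerCentralSeries (⊤ : Subgroup G) 3) := by
    have := hchainpow (Group.nilpotencyClass G - 3) (by omega)
    rwa [show Group.nilpotencyClass G - (Group.nilpotencyClass G - 3) = 3 by omega] at this
  have hcardL2 : 9 * 3 ^ (Group.nilpotencyClass G - 3) ≤ Nat.card (Subgroup.lowerCentralSeries (⊤ : Subgroup G) 2) := by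
    rw [hcard_step 2]
    exact Nat.mul_le_mul hd3ge hcardL3
  have hcardL1 : 3 * (9 * 3 ^ (Group.nilpotencyClass G - 3))
      ≤ Nat.card (Subgroup.lowerCentralSeries (⊤ : Subgroup G) 1) := by
    rw [hcard_step 1]
    exact Nat.mul_le_mul (hstrict 1 (by omega)) hcardL2
  have hidxL1 : (Subgroup.lowerCentralSeries (⊤ : Subgroup G) 1).index = 9 := by
    have h1 : (Subgroup.lowerCentralSeries (⊤ : Subgroup G) 1) = commutator G := lowerCentralSeries_one
    rw [h1]
    exact hcardAb
  have hcardG : 3 ^ (Group.nilpotencyClass G + 2) ≤ Nat.card G := by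
    have h1 := Subgroup.index_mul_card (Subgroup.lowerCentralSeries (⊤ : Subgroup G) 1)
    rw [hidxL1] at h1
    have h2 : 9 * (3 * (9 * 3 ^ (Group.nilpotencyClass G - 3))) ≤ Nat.card G := by
      rw [← h1]
      exact Nat.mul_le_mul le_rfl hcardL1
    calc 3 ^ (Group.nilpotencyClass G + 2)
        = 9 * (3 * (9 * 3 ^ (Group.nilpotencyClass G - 3))) := by
          rw [show Group.nilpotencyClass G + 2 = (Group.nilpotencyClass G - 3) + 5 by omega]
          ring
      _ ≤ Nat.card G := h2
  constructor
  · calc (3:ℕ) ^ 5 ≤ 3 ^ (Group.nilpotencyClass G + 2) :=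
        Nat.pow_le_pow_right (by norm_num) (by omega)
      _ ≤ Nat.card G := hcardG
  · intro n hn
    rw [hn] at hcardG
    exact (Nat.pow_le_pow_iff_right (by norm_num)).mp hcardG
end

section
/- Let k be a number field, π a nonzero element of 𝒪_k, and 𝔞 a nonzero ideal of 𝒪_k with 𝔞³ = π𝒪_k. Let K = k(c) where c is a cube root of π (in some extension field), so c ∈ 𝒪_K. Then the extended ideal 𝔞𝒪_K is principal, generated by c: 𝔞𝒪_K = c𝒪_K. -/
open NumberField

open UniqueFactorizationMonoid in
lemma aux_pow_left_inj_ideal {R : Type*} [CommRing R] [IsDedekindDomain R]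
    {I J : Ideal R} (hI : I ≠ 0) (hJ : J ≠ 0) {n : ℕ} (hn : n ≠ 0)
    (h : I ^ n = J ^ n) : I = J := by
  rw [← associated_iff_eq,
    associated_iff_normalizedFactors_eq_normalizedFactors hI hJ]
  have h2 := congrArg normalizedFactors h
  rw [normalizedFactors_pow, normalizedFactors_pow] at h2
  classical
  refine Multiset.ext.mpr fun p => ?_
  have h3 := congrArg (Multiset.count p) h2
  simp only [Multiset.count_nsmul] at h3
  exact Nat.eq_of_mul_eq_mul_left (Nat.pos_of_ne_zero hn) h3

/-- Let `k` be a number field, `π` a nonzero element of `𝒪_k`, and `𝔞` a nonzero ideal of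
`𝒪_k` with `𝔞³ = π𝒪_k`. If `K = k(c)` where `c ∈ 𝒪_K` is a cube root of `π`, then the
extended ideal `𝔞𝒪_K` is principal, generated by `c`: `𝔞𝒪_K = c𝒪_K`. -/
theorem extended_ideal_principal_of_cube_root
    (k K : Type*) [Field k] [Field K] [NumberField k] [NumberField K] [Algebra k K]
    (π : 𝓞 k) (hπ : π ≠ 0)
    (a : Ideal (𝓞 k)) (ha : a ≠ ⊥)
    (ha3 : a ^ 3 = Ideal.span {π})
    (c : 𝓞 K) (hc : c ^ 3 = algebraMap (𝓞 k) (𝓞 K) π)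
    (hKc : IntermediateField.adjoin k {(algebraMap (𝓞 K) K c)} = ⊤) :
    Ideal.map (algebraMap (𝓞 k) (𝓞 K)) a = Ideal.span {c} := by
  have hinj : Function.Injective (algebraMap (𝓞 k) (𝓞 K)) := by
    have h1 : Function.Injective (algebraMap (𝓞 K) K) := RingOfIntegers.coe_injective
    have h2 : Function.Injective (algebraMap (𝓞 k) K) :=
      (algebraMap k K).injective.comp RingOfIntegers.coe_injective
    intro x y hxy
    apply h2
    rw [IsScalarTower.algebraMap_apply (𝓞 k) (𝓞 K) K,
      IsScalarTower.algebraMap_apply (𝓞 k) (𝓞 K) K, hxy]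
  have hπK : algebraMap (𝓞 k) (𝓞 K) π ≠ 0 := fun h => hπ (hinj (by simpa using h))
  have hc0 : c ≠ 0 := fun h => hπK (by rw [← hc, h, zero_pow (by norm_num)])
  have key : (Ideal.map (algebraMap (𝓞 k) (𝓞 K)) a) ^ 3 = (Ideal.span {c}) ^ 3 := by
    rw [← Ideal.map_pow, ha3, Ideal.map_span, Set.image_singleton,
      Ideal.span_singleton_pow, hc]
  exact aux_pow_left_inj_ideal
    (by simp only [Ideal.zero_eq_bot, Ne, Ideal.map_eq_bot_iff_of_injective hinj]; exact ha)
    (by simpa [Ideal.span_singleton_eq_bot] using hc0) (by norm_num) key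
end

section
/- Let ζ denote a primitive cube root of unity in ℂ, let n > 1 be a cube-free integer, and let k = ℚ(ζ, n^{1/3}) ⊆ ℂ. Let p ≡ 1 (mod 3) be a prime and π ∈ ℤ[ζ] a prime element with π·π̄ = p, where π̄ is the complex conjugate of π. Let K₂ = k(π^{1/3}) ⊆ ℂ for a fixed cube root of π, and assume [K₂ : k] = 3. If neither π̄·π⁻¹ nor π̄·π⁻² is a cube in the multiplicative group k^×, then K₂ is not a Galois extension of ℚ; its image under complex conjugation is the distinct conjugate field k(π̄^{1/3}). -/
set_option maxHeartbeats 1000000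
set_option synthInstance.maxHeartbeats 400000

open IntermediateField Polynomial

/-- Let `ζ` be a primitive cube root of unity in `ℂ`, `n > 1` a cube-free integer, and
`k = ℚ(ζ, n^{1/3}) ⊆ ℂ`. Let `p ≡ 1 (mod 3)` be a prime and `π ∈ ℤ[ζ]` a prime element
with `π·π̄ = p`. Let `K₂ = k(π^{1/3})` for a fixed cube root `ρ` of `π`, with `[K₂:k] = 3`.
If neither `π̄·π⁻¹` nor `π̄·π⁻²` is a cube in `k^×`, then `K₂` is not Galois over `ℚ`,
and its image under complex conjugation is the distinct conjugate field `k(π̄^{1/3})`. -/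
theorem K2_not_galois_and_conjugate
    (ζ : ℂ) (hζ : IsPrimitiveRoot ζ 3)
    (n : ℕ) (hn : 1 < n) (hncf : ∀ q : ℕ, q.Prime → ¬ q ^ 3 ∣ n)
    (p : ℕ) (hp : p.Prime) (hp1 : p % 3 = 1)
    (π : Algebra.adjoin ℤ ({ζ} : Set ℂ)) (hπ : Prime π)
    (hπp : (π : ℂ) * starRingEnd ℂ (π : ℂ) = (p : ℂ))
    (ρ : ℂ) (hρ : ρ ^ 3 = (π : ℂ))
    (k K₂ : IntermediateField ℚ ℂ)
    (hk : k = IntermediateField.adjoin ℚ {ζ, (((n : ℝ) ^ ((1 : ℝ) / 3) : ℝ) : ℂ)})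
    (hK₂ : K₂ = IntermediateField.adjoin ℚ
      {ζ, (((n : ℝ) ^ ((1 : ℝ) / 3) : ℝ) : ℂ), ρ})
    (hle : k ≤ K₂)
    (hdeg : Module.finrank ℚ K₂ = 3 * Module.finrank ℚ k)
    (h1 : ¬ ∃ x : ℂ, x ∈ k ∧ starRingEnd ℂ (π : ℂ) = x ^ 3 * (π : ℂ))
    (h2 : ¬ ∃ x : ℂ, x ∈ k ∧ starRingEnd ℂ (π : ℂ) = x ^ 3 * (π : ℂ) ^ 2) :
    ¬ IsGalois ℚ K₂ ∧
    K₂.map ((Complex.conjAe.restrictScalars ℚ : ℂ ≃ₐ[ℚ] ℂ) : ℂ →ₐ[ℚ] ℂ) =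
      IntermediateField.adjoin ℚ
        {ζ, (((n : ℝ) ^ ((1 : ℝ) / 3) : ℝ) : ℂ), starRingEnd ℂ ρ} ∧
    K₂.map ((Complex.conjAe.restrictScalars ℚ : ℂ ≃ₐ[ℚ] ℂ) : ℂ →ₐ[ℚ] ℂ) ≠ K₂ := by
  set r : ℂ := (((n : ℝ) ^ ((1 : ℝ) / 3) : ℝ) : ℂ) with hrdef
  set f : ℂ →ₐ[ℚ] ℂ :=
    ((Complex.conjAe.restrictScalars ℚ : ℂ ≃ₐ[ℚ] ℂ) : ℂ →ₐ[ℚ] ℂ) with hfdef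
  have hf : ∀ z : ℂ, f z = starRingEnd ℂ z := fun z => rfl
  -- basic facts about ζ
  have hζ3 : ζ ^ 3 = 1 := hζ.pow_eq_one
  have hζ1 : ζ ≠ 1 := hζ.ne_one (by norm_num)
  have hζ0 : ζ ≠ 0 := hζ.ne_zero (by norm_num)
  have habs : ‖ζ‖ = 1 := by
    have h3 : (‖ζ‖) ^ 3 = 1 := by
      rw [← norm_pow, hζ3, norm_one]
    nlinarith [norm_nonneg ζ, sq_nonneg (‖ζ‖ - 1),
      sq_nonneg (‖ζ‖ + 1)]
  have hconjζ : starRingEnd ℂ ζ = ζ ^ 2 := by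
    have h1' : ζ * starRingEnd ℂ ζ = 1 := by
      rw [Complex.mul_conj, Complex.normSq_eq_norm_sq, habs]; norm_num
    have h2' : ζ * ζ ^ 2 = 1 := by rw [← pow_succ']; exact hζ3
    exact mul_left_cancel₀ hζ0 (h1'.trans h2'.symm)
  have hconjr : starRingEnd ℂ r = r := Complex.conj_ofReal _
  -- nonvanishing
  have hπ0 : (π : ℂ) ≠ 0 := by
    intro h
    exact hπ.ne_zero (Subtype.ext h)
  have hπb0 : starRingEnd ℂ (π : ℂ) ≠ 0 := by
    simpa using hπ0
  have hρ0 : ρ ≠ 0 := by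
    intro h
    apply hπ0
    rw [← hρ, h]; ring
  -- memberships
  have hζk : ζ ∈ k := by rw [hk]; exact subset_adjoin _ _ (by simp)
  have hrk : r ∈ k := by rw [hk]; exact subset_adjoin _ _ (by simp)
  have hζK : ζ ∈ K₂ := hle hζk
  have hrK : r ∈ K₂ := hle hrk
  have hρK : ρ ∈ K₂ := by rw [hK₂]; exact subset_adjoin _ _ (by simp)
  have hπk : (π : ℂ) ∈ k := by
    have hsub : Algebra.adjoin ℤ ({ζ} : Set ℂ) ≤ (k.toSubalgebra.restrictScalars ℤ) := by
      apply Algebra.adjoin_le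
      simpa using hζk
    exact hsub π.2
  have hπK : (π : ℂ) ∈ K₂ := hle hπk
  have hπbk : starRingEnd ℂ (π : ℂ) ∈ k := by
    have : starRingEnd ℂ (π : ℂ) = (p : ℂ) / (π : ℂ) := by
      field_simp [← hπp]
      linear_combination hπp
    rw [this]
    exact div_mem (by exact_mod_cast IntermediateField.natCast_mem k p) hπk
  -- k is stable under conjugation
  have hkconj : ∀ z ∈ k, starRingEnd ℂ z ∈ k := by
    intro z hz
    have hmap : k.map f ≤ k := by
      rw [hk, adjoin_map]
      apply adjoin_le_iff.mpr
      intro w hw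
      simp only [Set.image_insert_eq, Set.image_singleton] at hw
      rcases hw with h | h
      · rw [h, hf, hconjζ]
        exact pow_mem (subset_adjoin _ _ (by simp)) 2
      · simp only [Set.mem_singleton_iff] at h
        rw [h, hf, hconjr]
        exact subset_adjoin _ _ (by simp)
    exact hmap ⟨z, hz, rfl⟩
  -- integrality
  have hζint : IsIntegral ℚ ζ := by
    refine ⟨X ^ 3 - 1, monic_X_pow_sub_C 1 (by norm_num), ?_⟩
    simp [hζ3]
  have hrint : IsIntegral ℚ r := by
    refine ⟨X ^ 3 - C (n : ℚ), monic_X_pow_sub_C _ (by norm_num), ?_⟩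
    · have hr3 : r ^ 3 = (n : ℂ) := by
        rw [hrdef]
        rw [← Complex.ofReal_pow]
        norm_cast
        rw [← Real.rpow_natCast ((n : ℝ) ^ ((1:ℝ)/3)) 3, ← Real.rpow_mul (by positivity)]
        norm_num
      simp [hr3]
  have hπint : IsIntegral ℚ (π : ℂ) := by
    have hζintZ : IsIntegral ℤ ζ := by
      refine ⟨X ^ 3 - 1, monic_X_pow_sub_C 1 (by norm_num), ?_⟩
      simp [hζ3]
    have : Algebra.IsIntegral ℤ (Algebra.adjoin ℤ ({ζ} : Set ℂ)) := by
      apply Algebra.IsIntegral.adjoin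
      intro x hx
      rw [Set.mem_singleton_iff] at hx
      subst hx; exact hζintZ
    have hZ : IsIntegral ℤ (π : ℂ) :=
      (this.isIntegral π).map (Algebra.adjoin ℤ ({ζ} : Set ℂ)).val
    exact hZ.tower_top
  have hρint : IsIntegral ℚ ρ := by
    apply IsIntegral.of_pow (n := 3) (by norm_num)
    rw [hρ]; exact hπint
  -- finite dimensionality
  have hfink : FiniteDimensional ℚ k := by
    rw [hk]
    apply finiteDimensional_adjoin
    intro x hx
    rcases hx with h | h
    · subst h; exact hζint
    · simp only [Set.mem_singleton_iff] at h; subst h; exact hrint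
  have hfinK₂ : FiniteDimensional ℚ K₂ := by
    rw [hK₂]
    apply finiteDimensional_adjoin
    intro x hx
    rcases hx with h | h | h
    · subst h; exact hζint
    · subst h; exact hrint
    · simp only [Set.mem_singleton_iff] at h; subst h; exact hρint
  -- the extension E = k(ρ)
  set E : IntermediateField (↥k) ℂ := IntermediateField.adjoin (↥k) {ρ} with hEdef
  have hres : E.restrictScalars ℚ = K₂ := by
    erw [hEdef, restrictScalars_adjoin]
    apply le_antisymm
    · apply adjoin_le_iff.mpr
      rintro x (hx | hx)
      · exact hle hx
      · rw [Set.mem_singleton_iff] at hx; subst hx; exact hρK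
    · rw [hK₂]
      apply adjoin_le_iff.mpr
      rintro x (hx | hx | hx)
      · subst hx; exact subset_adjoin _ _ (Or.inl hζk)
      · subst hx; exact subset_adjoin _ _ (Or.inl hrk)
      · rw [Set.mem_singleton_iff] at hx; subst hx
        exact subset_adjoin _ _ (Or.inr rfl)
  have hmemE : ∀ x : ℂ, x ∈ E ↔ x ∈ K₂ := fun x => by rw [← hres]; rfl
  have hρintk : IsIntegral (↥k) ρ := hρint.tower_top
  have hfinE : FiniteDimensional (↥k) E := by
    rw [hEdef]
    exact IntermediateField.finiteDimensional_adjoin (fun x hx => by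
      rw [Set.mem_singleton_iff] at hx; subst hx; exact hρintk)
  have hrankE : Module.finrank (↥k) E = 3 := by
    have htower : Module.finrank ℚ (↥k) * Module.finrank (↥k) E = Module.finrank ℚ E :=
      Module.finrank_mul_finrank ℚ (↥k) E
    have hEK : Module.finrank ℚ E = Module.finrank ℚ K₂ := by
      refine LinearEquiv.finrank_eq (R := ℚ) (M := ↥E) (N := ↥K₂) ?_
      exact { toFun := fun x => ⟨x.1, (hmemE x.1).mp x.2⟩,
              map_add' := fun x y => rfl, map_smul' := fun c x => rfl,
              invFun := fun x => ⟨x.1, (hmemE x.1).mpr x.2⟩,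
              left_inv := fun x => rfl, right_inv := fun x => rfl }
    have hkpos : 0 < Module.finrank ℚ (↥k) := Module.finrank_pos
    rw [hEK, hdeg] at htower
    have := Nat.eq_of_mul_eq_mul_left hkpos (htower.trans (Nat.mul_comm 3 _))
    omega
  set πk : ↥k := ⟨(π : ℂ), hπk⟩ with hπkdef
  have halgmapπ : algebraMap (↥k) ℂ πk = (π : ℂ) := rfl
  have hminpoly : minpoly (↥k) ρ = X ^ 3 - C πk := by
    have hmon : (X ^ 3 - C πk).Monic := monic_X_pow_sub_C _ (by norm_num)
    have hdvd : minpoly (↥k) ρ ∣ X ^ 3 - C πk := minpoly.dvd _ _ (by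
      simp [hρ, halgmapπ])
    have hfr : Module.finrank (↥k) (IntermediateField.adjoin (↥k) ({ρ} : Set ℂ)) = 3 := by
      rw [← hEdef]; exact hrankE
    have hdeg3 : (minpoly (↥k) ρ).natDegree = 3 := by
      rw [← IntermediateField.adjoin.finrank hρintk]
      exact hfr
    refine Polynomial.eq_of_dvd_of_natDegree_le_of_leadingCoeff hdvd ?_ ?_
    · rw [hdeg3, natDegree_X_pow_sub_C]
    · rw [(minpoly.monic hρintk).leadingCoeff, hmon.leadingCoeff]
  -- the automorphism σ with σ ρ = ζρ
  have hroot : ζ * ρ ∈ (minpoly (↥k) ρ).aroots ℂ := by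
    rw [hminpoly, mem_aroots]
    constructor
    · exact (monic_X_pow_sub_C _ (by norm_num : 3 ≠ 0)).ne_zero
    · simp only [map_sub, map_pow, aeval_X, aeval_C, halgmapπ]
      rw [mul_pow, hζ3, hρ]; ring
  set σ : ↥E →ₐ[↥k] ℂ :=
    (IntermediateField.algHomAdjoinIntegralEquiv (↥k) hρintk).symm ⟨ζ * ρ, hroot⟩ with hσdef
  have hσgen : σ (AdjoinSimple.gen (↥k) ρ) = ζ * ρ :=
    IntermediateField.algHomAdjoinIntegralEquiv_symm_apply_gen (↥k) hρintk _
  set gE : ↥E := AdjoinSimple.gen (↥k) ρ with hgEdef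
  have hgEcoe : (gE : ℂ) = ρ := rfl
  -- elements fixed by σ lie in k
  have hfix : ∀ w : ↥E, σ w = (w : ℂ) → (w : ℂ) ∈ k := by
    intro w hw
    have hwint : IsIntegral (↥k) w := IsIntegral.of_finite _ _
    by_cases hw1 : (minpoly (↥k) w).natDegree = 1
    · obtain ⟨c, hc⟩ := minpoly.natDegree_eq_one_iff.mp hw1
      rw [← hc]
      exact c.2
    · exfalso
      have hdvd3 : (minpoly (↥k) w).natDegree ∣ 3 := by
        rw [← hrankE]; exact minpoly.degree_dvd hwint
      have h3 : (minpoly (↥k) w).natDegree = 3 := by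
        rcases (Nat.prime_three).eq_one_or_self_of_dvd _ hdvd3 with h | h
        · exact absurd h hw1
        · exact h
      have htop : IntermediateField.adjoin (↥k) ({w} : Set ↥E) = ⊤ := by
        apply IntermediateField.eq_of_le_of_finrank_eq le_top
        rw [IntermediateField.adjoin.finrank hwint, h3, finrank_top']
        exact hrankE.symm
      have hsub : Algebra.adjoin (↥k) ({w} : Set ↥E) = ⊤ := by
        have := IntermediateField.adjoin_simple_toSubalgebra_of_isAlgebraic hwint.isAlgebraic
        rw [htop] at this
        exact this.symm.trans rfl
      have heq : Algebra.adjoin (↥k) ({w} : Set ↥E) ≤ AlgHom.equalizer σ E.val := by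
        apply Algebra.adjoin_le
        intro x hx
        rw [Set.mem_singleton_iff] at hx; subst hx
        exact hw
      have hσval : ∀ x : ↥E, σ x = (x : ℂ) := by
        intro x
        have hx : x ∈ Algebra.adjoin (↥k) ({w} : Set ↥E) := by rw [hsub]; trivial
        exact heq hx
      have := hσval gE
      rw [hσgen, hgEcoe] at this
      exact hζ1 (mul_right_cancel₀ hρ0 (by rw [this, one_mul]))
  -- cube roots of unity
  have hcube : ∀ t : ℂ, t ^ 3 = 1 → t = 1 ∨ t = ζ ∨ t = ζ ^ 2 := by
    intro t ht
    have hsum : ζ ^ 2 + ζ + 1 = 0 := by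
      have hfac : (ζ - 1) * (ζ ^ 2 + ζ + 1) = 0 := by linear_combination hζ3
      rcases mul_eq_zero.mp hfac with h | h
      · exact absurd (sub_eq_zero.mp h) hζ1
      · exact h
    have hfac : (t - 1) * ((t - ζ) * (t - ζ ^ 2)) = 0 := by
      linear_combination ht + (t - t ^ 2) * hsum + (t - 1) * hζ3
    rcases mul_eq_zero.mp hfac with h | h
    · exact Or.inl (sub_eq_zero.mp h)
    · rcases mul_eq_zero.mp h with h' | h'
      · exact Or.inr (Or.inl (sub_eq_zero.mp h'))
      · exact Or.inr (Or.inr (sub_eq_zero.mp h'))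
  -- the key fact: conj ρ ∉ K₂
  have key : starRingEnd ℂ ρ ∉ K₂ := by
    intro hyK
    set y : ℂ := starRingEnd ℂ ρ with hydef
    have hy0 : y ≠ 0 := by simpa [hydef] using hρ0
    have hyE : y ∈ E := (hmemE y).mpr hyK
    set yE : ↥E := ⟨y, hyE⟩ with hyEdef
    have hy3 : y ^ 3 = starRingEnd ℂ (π : ℂ) := by rw [hydef, ← map_pow, hρ]
    have hσy3 : (σ yE) ^ 3 = starRingEnd ℂ (π : ℂ) := by
      have hyE3 : yE ^ 3 = algebraMap (↥k) ↥E ⟨starRingEnd ℂ (π : ℂ), hπbk⟩ := by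
        apply Subtype.ext
        push_cast
        exact hy3
      rw [← map_pow, hyE3, AlgHom.commutes]
      rfl
    have ht3 : (σ yE / y) ^ 3 = 1 := by
      rw [div_pow, hσy3, hy3, div_self hπb0]
    rcases hcube _ ht3 with h | h | h
    · -- σ yE = y, so y ∈ k
      rw [div_eq_one_iff_eq hy0] at h
      have hyk : y ∈ k := hfix yE h
      have hcy3 : (starRingEnd ℂ y) ^ 3 = (π : ℂ) := by
        rw [← map_pow, hy3, Complex.conj_conj]
      have hcy0 : starRingEnd ℂ y ≠ 0 := by simpa using hy0
      refine h1 ⟨y / starRingEnd ℂ y, div_mem hyk (hkconj y hyk), ?_⟩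
      field_simp
      rw [hcy3, hy3]
      try ring
    · -- σ yE = ζ y
      rw [div_eq_iff hy0] at h
      set w : ↥E := yE * gE ^ 2 with hwdef
      have hwcoe : (w : ℂ) = y * ρ ^ 2 := rfl
      have hσw : σ w = (w : ℂ) := by
        rw [hwdef, map_mul, map_pow, hσgen, h, hwcoe]
        rw [mul_pow]
        have : ζ * y * (ζ ^ 2 * ρ ^ 2) = ζ ^ 3 * (y * ρ ^ 2) := by ring
        rw [this, hζ3, one_mul]
      have hwk : y * ρ ^ 2 ∈ k := by rw [← hwcoe]; exact hfix w hσw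
      refine h1 ⟨y * ρ ^ 2 / (π : ℂ), div_mem hwk hπk, ?_⟩
      have hw3 : (y * ρ ^ 2) ^ 3 = starRingEnd ℂ (π : ℂ) * (π : ℂ) ^ 2 := by
        rw [mul_pow, hy3, ← pow_mul]
        rw [show ρ ^ (2 * 3) = (ρ ^ 3) ^ 2 by ring, hρ]
      rw [div_pow, hw3]
      field_simp
    · -- σ yE = ζ² y
      rw [div_eq_iff hy0] at h
      set w : ↥E := yE * gE with hwdef
      have hwcoe : (w : ℂ) = y * ρ := rfl
      have hσw : σ w = (w : ℂ) := by
        rw [hwdef, map_mul, hσgen, h, hwcoe]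
        have : ζ ^ 2 * y * (ζ * ρ) = ζ ^ 3 * (y * ρ) := by ring
        rw [this, hζ3, one_mul]
      have hwk : y * ρ ∈ k := by rw [← hwcoe]; exact hfix w hσw
      refine h2 ⟨y * ρ / (π : ℂ), div_mem hwk hπk, ?_⟩
      have hw3 : (y * ρ) ^ 3 = starRingEnd ℂ (π : ℂ) * (π : ℂ) := by
        rw [mul_pow, hy3, hρ]
      rw [div_pow, hw3]
      field_simp
  -- part 2: the image of K₂ under conjugation
  have hmapeq : K₂.map f = IntermediateField.adjoin ℚ {ζ, r, starRingEnd ℂ ρ} := by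
    rw [hK₂, adjoin_map]
    have himg : f '' {ζ, r, ρ} = {ζ ^ 2, r, starRingEnd ℂ ρ} := by
      simp only [Set.image_insert_eq, Set.image_singleton, hf, hconjζ, hconjr]
    rw [himg]
    apply le_antisymm
    · apply adjoin_le_iff.mpr
      rintro x (hx | hx | hx)
      · subst hx
        exact pow_mem (subset_adjoin _ _ (by simp)) 2
      · subst hx; exact subset_adjoin _ _ (by simp)
      · rw [Set.mem_singleton_iff] at hx; subst hx
        exact subset_adjoin _ _ (by simp)
    · apply adjoin_le_iff.mpr
      rintro x (hx | hx | hx)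
      · have hζ4 : ζ = (ζ ^ 2) ^ 2 := by
          rw [← pow_mul]
          rw [show ζ ^ (2 * 2) = ζ ^ 3 * ζ by ring, hζ3, one_mul]
        rw [hx]
        nth_rewrite 2 [hζ4]
        exact pow_mem (show ζ ^ 2 ∈ IntermediateField.adjoin ℚ {ζ ^ 2, r, starRingEnd ℂ ρ}
          from subset_adjoin _ _ (Set.mem_insert _ _)) 2
      · subst hx; exact subset_adjoin _ _ (by simp)
      · rw [Set.mem_singleton_iff] at hx; subst hx
        exact subset_adjoin _ _ (by simp)
  -- part 3: the image is distinct
  have hmapne : K₂.map f ≠ K₂ := by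
    intro heq
    apply key
    rw [← heq, hmapeq]
    exact subset_adjoin _ _ (by simp)
  refine ⟨?_, hmapeq, hmapne⟩
  -- part 1: not Galois
  intro hgal
  apply hmapne
  apply le_antisymm
  · rintro x ⟨z, hz, rfl⟩
    have hthis : f z = ((AlgHom.restrictNormal f K₂) ⟨z, hz⟩ : ℂ) :=
      (AlgHom.restrictNormal_commutes f K₂ ⟨z, hz⟩).symm
    show f z ∈ K₂
    rw [hthis]
    exact ((AlgHom.restrictNormal f K₂) ⟨z, hz⟩).2
  · intro z hz
    have hcz : starRingEnd ℂ z ∈ K₂ := by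
      have hthis : f z = ((AlgHom.restrictNormal f K₂) ⟨z, hz⟩ : ℂ) :=
        (AlgHom.restrictNormal_commutes f K₂ ⟨z, hz⟩).symm
      rw [hf] at hthis
      rw [hthis]
      exact ((AlgHom.restrictNormal f K₂) ⟨z, hz⟩).2
    refine ⟨starRingEnd ℂ z, hcz, ?_⟩
    show f (starRingEnd ℂ z) = z
    rw [hf, Complex.conj_conj]
end
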